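/- arXiv:1205.0357 — 2 statements merged into one kernel-verified Lean document; each statement's English description precedes it below -/
import Mathlib

section
/- The set of canonical partial term graphs over a signature Σ, partially ordered by the rigid partial order ≤⊥r, forms a complete semilattice: it is a cpo (with least element the one-node term graph ⊥) in which every non-empty subset has a greatest lower bound. -/
set_option autoImplicit false

namespace TGR

/-- A signature: a type of symbols, each with a finite arity. -/
structure Signature where
  Sym : Type
  ar : Sym → ℕ

/-- The signature `Σ_⊥`: `Σ` extended by a fresh nullary symbol `⊥` (here `none`). -/
def Signature.bot (S : Signature) : Signature where
  Sym := Option S.Sym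
  ar := fun o => match o with
    | none => 0
    | some f => S.ar f

/-- A rooted graph over a signature `S` with nodes `N`: a labelling, a successor
function respecting arities, and a root node. -/
structure TermGraph (S : Signature) (N : Type) where
  lab : N → S.Sym
  suc : (n : N) → Fin (S.ar (lab n)) → N
  root : N

namespace TermGraph

variable {S : Signature} {N M K : Type}

/-- `g.IsPos π n`: `π` is a position (path of successor indices from the root) of node `n`. -/
inductive IsPos (g : TermGraph S N) : List ℕ → N → Prop
  | root : IsPos g [] g.root
  | step {π : List ℕ} {n : N} (h : IsPos g π n) (i : Fin (S.ar (g.lab n))) :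
      IsPos g (π ++ [(i : ℕ)]) (g.suc n i)

/-- All nodes are reachable from the root. -/
def Reachable (g : TermGraph S N) : Prop :=
  ∀ n : N, ∃ π : List ℕ, g.IsPos π n

/-- The set of positions of `g`. -/
def pos (g : TermGraph S N) : Set (List ℕ) :=
  {π | ∃ n : N, g.IsPos π n}

/-- The set of positions of node `n` in `g`. -/
def nodePos (g : TermGraph S N) (n : N) : Set (List ℕ) :=
  {π | g.IsPos π n}

/-- `π ∼_g π'`: `π` and `π'` are positions of the same node. -/
def Aliases (g : TermGraph S N) (π π' : List ℕ) : Prop :=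
  ∃ n : N, g.IsPos π n ∧ g.IsPos π' n

/-- A position is acyclic if it passes no node twice. -/
def IsAcyclicPos (g : TermGraph S N) (π : List ℕ) : Prop :=
  ∀ (π₁ π₂ : List ℕ) (n : N), π₁ <+: π₂ → π₂ <+: π →
    g.IsPos π₁ n → g.IsPos π₂ n → π₁ = π₂

/-- The set of acyclic positions of node `n` in `g`. -/
def nodePosAcy (g : TermGraph S N) (n : N) : Set (List ℕ) :=
  {π | g.IsPos π n ∧ g.IsAcyclicPos π}

/-- The set of acyclic positions of `g`. -/
def posAcy (g : TermGraph S N) : Set (List ℕ) :=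
  {π | (∃ n : N, g.IsPos π n) ∧ g.IsAcyclicPos π}

/-- The depth of a node: the minimal length of its positions. -/
noncomputable def depth (g : TermGraph S N) (n : N) : ℕ :=
  sInf {k : ℕ | ∃ π : List ℕ, g.IsPos π n ∧ π.length = k}

open Classical in
/-- The (unique) node at a position. -/
noncomputable def nodeAt (g : TermGraph S N) (π : List ℕ) : N :=
  if h : ∃ n : N, g.IsPos π n then h.choose else g.root

/-- The label `g(π)` at a position. -/
noncomputable def labAt (g : TermGraph S N) (π : List ℕ) : S.Sym :=
  g.lab (g.nodeAt π)

/-- `Δ`-homomorphism: root, labelling and successor conditions, the latter two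
suspended on `Δ`-labelled nodes. -/
structure IsDHom (Δ : Set S.Sym) (g : TermGraph S N) (h : TermGraph S M)
    (φ : N → M) : Prop where
  root_eq : φ g.root = h.root
  lab_eq : ∀ n : N, g.lab n ∉ Δ → h.lab (φ n) = g.lab n
  suc_eq : ∀ n : N, g.lab n ∉ Δ → ∀ (i : ℕ) (hi : i < S.ar (g.lab n))
      (hi' : i < S.ar (h.lab (φ n))),
      φ (g.suc n ⟨i, hi⟩) = h.suc (φ n) ⟨i, hi'⟩

/-- Rigidity: `Pa_g(n) = Pa_h(φ n)` for all non-`Δ`-labelled nodes `n`. -/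
def IsRigid (Δ : Set S.Sym) (g : TermGraph S N) (h : TermGraph S M)
    (φ : N → M) : Prop :=
  ∀ n : N, g.lab n ∉ Δ → g.nodePosAcy n = h.nodePosAcy (φ n)

/-- Rigid `Δ`-homomorphism. -/
def IsRigidDHom (Δ : Set S.Sym) (g : TermGraph S N) (h : TermGraph S M)
    (φ : N → M) : Prop :=
  IsDHom Δ g h φ ∧ IsRigid Δ g h φ

/-- Isomorphism of term graphs: a homomorphism with an inverse homomorphism. -/
def Iso (g : TermGraph S N) (h : TermGraph S M) : Prop :=
  ∃ (φ : N → M) (ψ : M → N), IsDHom ∅ g h φ ∧ IsDHom ∅ h g ψ ∧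
    (∀ n : N, ψ (φ n) = n) ∧ (∀ m : M, φ (ψ m) = m)

/-- A partial term graph (over `Σ_⊥`) is total if no node is labelled `⊥`. -/
def Total (g : TermGraph S.bot N) : Prop := ∀ n : N, g.lab n ≠ none

/-- Rigid `⊥`-homomorphism between partial term graphs. -/
def IsRigidBotHom (g : TermGraph S.bot N) (h : TermGraph S.bot M)
    (φ : N → M) : Prop :=
  IsRigidDHom ({none} : Set (Option S.Sym)) g h φ

/-- The `⊥`-depth of a partial term graph: the minimal depth of a `⊥`-labelled
node, `ω` (`⊤`) if there is none. -/
noncomputable def botDepth (g : TermGraph S.bot N) : ℕ∞ :=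
  sInf {d : ℕ∞ | ∃ n : N, g.lab n = none ∧ (g.depth n : ℕ∞) = d}

/-- `m` is an acyclic predecessor of `n`: some acyclic position `π ++ [i]` of `n`
has `π` a position of `m`. -/
def acyPred (g : TermGraph S N) (n : N) : Set N :=
  {m | ∃ (π : List ℕ) (i : ℕ), (π ++ [i]) ∈ g.nodePosAcy n ∧ g.IsPos π m}

/-- Retained nodes of the truncation at depth `d`: the least set of nodes
containing all nodes of depth `< d` and closed under acyclic predecessors. -/
inductive Retained (g : TermGraph S N) (d : ℕ) : N → Prop
  | shallow {n : N} : g.depth n < d → Retained g d n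
  | pred {n m : N} : Retained g d n → m ∈ g.acyPred n → Retained g d m

theorem not_retained_zero {g : TermGraph S N} (n : N) : ¬ g.Retained 0 n := by
  intro h
  induction h with
  | shallow hd => exact Nat.not_lt_zero _ hd
  | pred _ _ ih => exact ih

/-- Fringe nodes of the truncation at depth `d` (a pair `(n, i)` stands for the
fresh node `n^i`); at depth `0` the fringe is just (a copy of) the root. -/
def IsFringe (g : TermGraph S.bot N) (d : ℕ) (p : N × ℕ) : Prop :=
  if d = 0 then p = (g.root, 0)
  else g.Retained d p.1 ∧ ∃ h : p.2 < S.bot.ar (g.lab p.1),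
    (¬ g.Retained d (g.suc p.1 ⟨p.2, h⟩) ∨
      (d - 1 ≤ g.depth p.1 ∧ p.1 ∉ g.acyPred (g.suc p.1 ⟨p.2, h⟩)))

/-- The node set of the rigid truncation: retained nodes plus fringe nodes. -/
def TNode (g : TermGraph S.bot N) (d : ℕ) : Type :=
  {x : N ⊕ (N × ℕ) // Sum.elim (g.Retained d) (g.IsFringe d) x}

def truncLab (g : TermGraph S.bot N) (d : ℕ) (x : TNode g d) : S.bot.Sym :=
  Sum.elim (fun n => g.lab n) (fun _ => none) x.1

open Classical in
noncomputable def truncSuc (g : TermGraph S.bot N) (d : ℕ) :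
    (x : TNode g d) → Fin (S.bot.ar (truncLab g d x)) → TNode g d
  | ⟨Sum.inl n, hn⟩ => fun i =>
      if hf : g.IsFringe d (n, (i : ℕ)) then ⟨Sum.inr (n, (i : ℕ)), hf⟩
      else
        ⟨Sum.inl (g.suc n ⟨(i : ℕ), i.isLt⟩), by
          show g.Retained d (g.suc n ⟨(i : ℕ), i.isLt⟩)
          rcases Nat.eq_zero_or_pos d with hd | hd
          · subst hd
            exact ((not_retained_zero n) hn).elim
          · by_contra hc
            apply hf
            show g.IsFringe d (n, (i : ℕ))
            unfold IsFringe
            rw [if_neg (Nat.pos_iff_ne_zero.mp hd)]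
            exact ⟨hn, i.isLt, Or.inl hc⟩⟩
  | ⟨Sum.inr p, hp⟩ => fun i => absurd i.isLt (Nat.not_lt_zero _)

noncomputable def truncRoot (g : TermGraph S.bot N) (d : ℕ) : TNode g d :=
  if hd : d = 0 then
    ⟨Sum.inr (g.root, 0), by
      subst hd
      show g.IsFringe 0 (g.root, 0)
      simp [IsFringe]⟩
  else
    ⟨Sum.inl g.root, by
      show g.Retained d g.root
      exact Retained.shallow (lt_of_le_of_lt
        (Nat.sInf_le ⟨[], IsPos.root, rfl⟩) (Nat.pos_of_ne_zero hd))⟩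

/-- The rigid truncation `g†d` of a partial term graph at finite depth `d`. -/
noncomputable def trunc (g : TermGraph S.bot N) (d : ℕ) :
    TermGraph S.bot (TNode g d) where
  lab := truncLab g d
  suc := truncSuc g d
  root := truncRoot g d

end TermGraph

/-- A canonical term graph: a term graph whose nodes are sets of positions,
each node being exactly its set of positions, with all nodes reachable. -/
structure CTG (S : Signature) where
  nodes : Set (Set (List ℕ))
  tg : TermGraph S ↥nodes
  reach : tg.Reachable
  canon : ∀ n : ↥nodes, (n : Set (List ℕ)) = tg.nodePos n

namespace CTG

variable {S : Signature}

def pos (g : CTG S) : Set (List ℕ) := g.tg.pos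
def Aliases (g : CTG S) : List ℕ → List ℕ → Prop := g.tg.Aliases
def posAcy (g : CTG S) : Set (List ℕ) := g.tg.posAcy
noncomputable def labAt (g : CTG S) : List ℕ → S.Sym := g.tg.labAt

/-- A canonical partial term graph is total if it has no `⊥`-labelled node. -/
def Total (g : CTG S.bot) : Prop := g.tg.Total

/-- The rigid partial order `g ≤⊥r h`: there is a rigid `⊥`-homomorphism
from `g` to `h`. -/
def LeR (g h : CTG S.bot) : Prop :=
  ∃ φ, TermGraph.IsRigidBotHom g.tg h.tg φ

noncomputable def botDepth (g : CTG S.bot) : ℕ∞ := g.tg.botDepth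

/-- `TruncIso g h d`: the rigid truncations of `g` and `h` at depth `d ≤ ω`
are isomorphic (`g†ω = g`). -/
def TruncIso {N M : Type} (g : TermGraph S.bot N) (h : TermGraph S.bot M)
    (d : ℕ∞) : Prop :=
  (d = ⊤ → TermGraph.Iso g h) ∧
  ∀ k : ℕ, d = (k : ℕ∞) → TermGraph.Iso (g.trunc k) (h.trunc k)

/-- The rigid similarity `sim†(g,h)`: the maximal `d ≤ ω` such that
`g†d ≅ h†d`. -/
noncomputable def simr (g h : CTG S.bot) : ℕ∞ :=
  sSup {d : ℕ∞ | TruncIso g.tg h.tg d}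

open Classical in
/-- The rigid distance `d†(g,h) = 2^{-sim†(g,h)}` (with `2^{-ω} = 0`). -/
noncomputable def rdist (g h : CTG S.bot) : ℝ :=
  if simr g h = ⊤ then 0 else (1 / 2 : ℝ) ^ (simr g h).toNat

def IsUB (A : Set (CTG S.bot)) (u : CTG S.bot) : Prop := ∀ g ∈ A, LeR g u

def IsLubR (A : Set (CTG S.bot)) (u : CTG S.bot) : Prop :=
  IsUB A u ∧ ∀ v, IsUB A v → LeR u v

def IsLB (A : Set (CTG S.bot)) (l : CTG S.bot) : Prop := ∀ g ∈ A, LeR l g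

def IsGlbR (A : Set (CTG S.bot)) (l : CTG S.bot) : Prop :=
  IsLB A l ∧ ∀ m, IsLB A m → LeR m l

/-- A directed set: non-empty and every two elements have an upper bound inside. -/
def DirectedR (A : Set (CTG S.bot)) : Prop :=
  A.Nonempty ∧ ∀ g ∈ A, ∀ h ∈ A, ∃ u ∈ A, LeR g u ∧ LeR h u

/-- `L` is the limit inferior `⨆_{β<α} ⨅_{β≤ι<α} f ι` of the ordinal-indexed
sequence `(f ι)_{ι<α}` in the rigid partial order. -/
def IsLiminfR (α : Ordinal.{0}) (f : Ordinal.{0} → CTG S.bot) (L : CTG S.bot) : Prop :=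
  ∃ inf : Ordinal.{0} → CTG S.bot,
    (∀ β < α, IsGlbR {g | ∃ ι, β ≤ ι ∧ ι < α ∧ g = f ι} (inf β)) ∧
    IsLubR {g | ∃ β < α, g = inf β} L

/-- Cauchy condition for an ordinal-indexed sequence w.r.t. the rigid distance. -/
def OrdCauchy (α : Ordinal.{0}) (f : Ordinal.{0} → CTG S.bot) : Prop :=
  ∀ ε : ℝ, 0 < ε → ∃ β < α, ∀ ι ι' : Ordinal.{0},
    β < ι → ι < ι' → ι' < α → rdist (f ι) (f ι') < ε

/-- Convergence of an ordinal-indexed sequence to `g` w.r.t. the rigid distance. -/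
def OrdTendsto (α : Ordinal.{0}) (f : Ordinal.{0} → CTG S.bot) (g : CTG S.bot) : Prop :=
  ∀ ε : ℝ, 0 < ε → ∃ β < α, ∀ ι : Ordinal.{0}, β < ι → ι < α → rdist (f ι) g < ε

/-- `u` is the unravelling of `g`: the term tree with the same positions and
labels as `g` and trivial aliasing. -/
def IsUnravelling (g u : CTG S) : Prop :=
  u.pos = g.pos ∧ (∀ π ∈ g.pos, u.labAt π = g.labAt π) ∧
  (∀ π π' : List ℕ, u.Aliases π π' ↔ (π ∈ g.pos ∧ π = π'))

end CTG

/-- A labelled quotient tree over a signature `S`. -/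
structure LQT (S : Signature) where
  P : Set (List ℕ)
  nonempty : P.Nonempty
  l : List ℕ → S.Sym
  rel : List ℕ → List ℕ → Prop
  rel_refl : ∀ π ∈ P, rel π π
  rel_symm : ∀ π π' : List ℕ, rel π π' → rel π' π
  rel_trans : ∀ π π' π'' : List ℕ, rel π π' → rel π' π'' → rel π π''
  rel_mem : ∀ π π' : List ℕ, rel π π' → π ∈ P ∧ π' ∈ P
  reach_mem : ∀ (π : List ℕ) (i : ℕ), π ++ [i] ∈ P → π ∈ P
  reach_ar : ∀ (π : List ℕ) (i : ℕ), π ++ [i] ∈ P → i < S.ar (l π)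
  congr_lab : ∀ π π' : List ℕ, rel π π' → l π = l π'
  congr_suc : ∀ (π π' : List ℕ) (i : ℕ), rel π π' → i < S.ar (l π) →
    rel (π ++ [i]) (π' ++ [i])

end TGR

/-!
A rigid `⊥`-homomorphism between canonical term graphs is determined by positions: `g ≤⊥r h`
iff every aliasing of `g` holds in `h`, every non-`⊥` label of `g` appears in `h` at the same
position, and at non-`⊥` positions the acyclic aliases are the same in `g` and `h`. Canonicity
turns mutual homomorphisms into equality, and the one-node graph `⊥` is below everything.

The least upper bound of a family `A` is the labelled quotient tree whose aliasing is the
congruence generated by the aliasings of the members of `A`. This is a genuine upper bound as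
soon as labels and acyclic positions are consistent along that congruence, which holds when
`A` is directed, and also when `A` is bounded above: there an induction on the length of
positions shows that acyclicity for the generated congruence implies acyclicity in the bound.
Finally, the greatest lower bound of a non-empty `B` is the least upper bound of its lower
bounds, which contain `⊥` and are bounded above by any member of `B`.
-/

namespace TGR

theorem Signature.bot_ar_eq_zero (S : Signature) :
    ∀ s ∈ ({none} : Set S.bot.Sym), S.bot.ar s = 0 := by
  rintro _ rfl
  rfl

namespace TermGraph

variable {S : Signature} {N M : Type} {g : TermGraph S N}

theorem eq_root_of_isPos_nil {n : N} (h : g.IsPos [] n) : n = g.root := by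
  generalize hπ : ([] : List ℕ) = π at h
  cases h with
  | root => rfl
  | step => simp at hπ

theorem isPos_snoc {π : List ℕ} {i : ℕ} {n : N} (h : g.IsPos (π ++ [i]) n) :
    ∃ (m : N) (hi : i < S.ar (g.lab m)), g.IsPos π m ∧ n = g.suc m ⟨i, hi⟩ := by
  generalize hπ : π ++ [i] = ρ at h
  cases h with
  | root => simp at hπ
  | @step π' m hm j =>
    obtain ⟨rfl, rfl⟩ : π = π' ∧ i = j := by simpa using hπ
    exact ⟨m, j.isLt, hm, rfl⟩

theorem isPos_unique {π : List ℕ} {n m : N} (hn : g.IsPos π n) (hm : g.IsPos π m) :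
    n = m := by
  induction π using List.reverseRecOn generalizing n m with
  | nil => rw [eq_root_of_isPos_nil hn, eq_root_of_isPos_nil hm]
  | append_singleton π i ih =>
    obtain ⟨a, ha, hpa, rfl⟩ := isPos_snoc hn
    obtain ⟨b, hb, hpb, rfl⟩ := isPos_snoc hm
    cases ih hpa hpb
    rfl

theorem exists_isPos_of_prefix {π ρ : List ℕ} {n : N} (h : g.IsPos π n) (hρ : ρ <+: π) :
    ∃ m, g.IsPos ρ m := by
  induction h generalizing ρ with
  | root => exact ⟨g.root, List.prefix_nil.mp hρ ▸ IsPos.root⟩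
  | step h i ih =>
    rcases List.prefix_concat_iff.mp hρ with rfl | hρ
    · exact ⟨_, h.step i⟩
    · exact ih hρ

theorem IsAcyclicPos.prefix {π ρ : List ℕ} (h : g.IsAcyclicPos π) (hρ : ρ <+: π) :
    g.IsAcyclicPos ρ :=
  fun ρ₁ ρ₂ n h₁ h₂ => h ρ₁ ρ₂ n h₁ (h₂.trans hρ)

theorem isAcyclicPos_nil : g.IsAcyclicPos [] := by
  intro ρ₁ ρ₂ _ h₁ h₂ _ _
  rw [List.prefix_nil.mp h₂, List.prefix_nil.mp (h₁.trans h₂)]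

theorem IsDHom.isPos {Δ : Set S.Sym} (hΔ : ∀ s ∈ Δ, S.ar s = 0) {h : TermGraph S M}
    {φ : N → M} (hφ : IsDHom Δ g h φ) {π : List ℕ} {n : N} (hn : g.IsPos π n) :
    h.IsPos π (φ n) := by
  induction hn with
  | root => exact hφ.root_eq ▸ IsPos.root
  | @step π m _ i ih =>
    have hm : g.lab m ∉ Δ := fun hmΔ => (Fin.cast (hΔ _ hmΔ) i).elim0
    have hi : (i : ℕ) < S.ar (h.lab (φ m)) := by rw [hφ.lab_eq m hm]; exact i.isLt
    rw [show g.suc m i = g.suc m ⟨i, i.isLt⟩ from rfl, hφ.suc_eq m hm i i.isLt hi]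
    exact ih.step ⟨i, hi⟩

end TermGraph

namespace CTG

variable {S : Signature}

def MemLab (g : CTG S) (π : List ℕ) (v : S.Sym) : Prop :=
  ∃ n, g.tg.IsPos π n ∧ g.tg.lab n = v

theorem mem_iff_isPos (g : CTG S) (n : g.nodes) (π : List ℕ) :
    π ∈ (n : Set (List ℕ)) ↔ g.tg.IsPos π n := by
  rw [g.canon n]
  rfl

section Aliases

variable {g : CTG S} {π π' π'' : List ℕ}

theorem aliases_refl {n : g.nodes} (h : g.tg.IsPos π n) : g.Aliases π π := ⟨n, h, h⟩

theorem aliases_symm (h : g.Aliases π π') : g.Aliases π' π :=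
  let ⟨n, h₁, h₂⟩ := h
  ⟨n, h₂, h₁⟩

theorem isPos_of_aliases {n : g.nodes} (h : g.Aliases π π') (hn : g.tg.IsPos π n) :
    g.tg.IsPos π' n := by
  obtain ⟨m, h₁, h₂⟩ := h
  rwa [TermGraph.isPos_unique hn h₁]

theorem aliases_trans (h : g.Aliases π π') (h' : g.Aliases π' π'') : g.Aliases π π'' :=
  let ⟨n, h₁, h₂⟩ := h
  ⟨n, h₁, isPos_of_aliases h' h₂⟩

theorem aliases_comm_iff (h : g.Aliases π π') : g.Aliases π'' π ↔ g.Aliases π'' π' :=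
  ⟨fun h' => aliases_trans h' h, fun h' => aliases_trans h' (aliases_symm h)⟩

theorem memLab_of_aliases {v : S.Sym} (h : g.Aliases π π') (hv : g.MemLab π' v) :
    g.MemLab π v :=
  let ⟨n, hn, hl⟩ := hv
  ⟨n, isPos_of_aliases (aliases_symm h) hn, hl⟩

end Aliases

theorem aliases_snoc {g : CTG S.bot} {π π' : List ℕ} {f : S.Sym} {i : ℕ}
    (h : g.Aliases π π') (hf : g.MemLab π (some f)) (hi : i < S.ar f) :
    g.Aliases (π ++ [i]) (π' ++ [i]) := by
  obtain ⟨n, hn, hl⟩ := hf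
  have hi' : i < S.bot.ar (g.tg.lab n) := by rw [hl]; exact hi
  exact ⟨_, hn.step ⟨i, hi'⟩, (isPos_of_aliases h hn).step ⟨i, hi'⟩⟩

theorem exists_memLab_of_isPos_snoc {g : CTG S.bot} {π : List ℕ} {i : ℕ} {n : g.nodes}
    (h : g.tg.IsPos (π ++ [i]) n) : ∃ f, g.MemLab π (some f) ∧ i < S.ar f := by
  obtain ⟨m, hi, hm, -⟩ := TermGraph.isPos_snoc h
  match hl : g.tg.lab m, hi with
  | some f, hi => exact ⟨f, ⟨m, hm, hl⟩, hi⟩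

theorem ext_of_lab {g h : CTG S} (hN : g.nodes = h.nodes)
    (hlab : ∀ (n : g.nodes) (m : h.nodes), (n : Set (List ℕ)) = m → g.tg.lab n = h.tg.lab m) :
    g = h := by
  obtain ⟨N, t, reach, canon⟩ := g
  obtain ⟨N', t', reach', canon'⟩ := h
  dsimp only at hN hlab
  subst hN
  have hpos : ∀ π n, t.IsPos π n ↔ t'.IsPos π n := fun π n => by
    change π ∈ t.nodePos n ↔ π ∈ t'.nodePos n
    rw [← canon, ← canon']
  obtain ⟨lab, suc, root⟩ := t
  obtain ⟨lab', suc', root'⟩ := t'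
  obtain rfl : lab = lab' := funext fun n => hlab n n rfl
  obtain rfl : suc = suc' := funext fun n => funext fun i => by
    obtain ⟨π, hπ⟩ := reach n
    exact TermGraph.isPos_unique (hπ.step i) ((hpos _ _).mpr (((hpos _ _).mp hπ).step i))
  obtain rfl : root = root' :=
    TermGraph.isPos_unique .root ((hpos _ _).mpr .root)
  rfl

/-- `g ≤⊥r h` read off positions; `LeR.posLe` and `PosLe.leR` show the equivalence. -/
structure PosLe (g h : CTG S.bot) : Prop where
  aliases : ∀ {π π' : List ℕ}, g.Aliases π π' → h.Aliases π π'
  memLab : ∀ {π : List ℕ} {f : S.Sym}, g.MemLab π (some f) → h.MemLab π (some f)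
  rigid : ∀ {π : List ℕ} {f : S.Sym}, g.MemLab π (some f) → ∀ π' : List ℕ,
    (g.Aliases π' π ∧ g.tg.IsAcyclicPos π') ↔ (h.Aliases π' π ∧ h.tg.IsAcyclicPos π')

theorem PosLe.trans {g h k : CTG S.bot} (hgh : PosLe g h) (hhk : PosLe h k) : PosLe g k where
  aliases hal := hhk.aliases (hgh.aliases hal)
  memLab hf := hhk.memLab (hgh.memLab hf)
  rigid hf π' := (hgh.rigid hf π').trans (hhk.rigid (hgh.memLab hf) π')

theorem LeR.posLe {g h : CTG S.bot} (hle : g.LeR h) : PosLe g h := by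
  obtain ⟨φ, hom, hrig⟩ := hle
  have hpos : ∀ {π n}, g.tg.IsPos π n → h.tg.IsPos π (φ n) :=
    hom.isPos (Signature.bot_ar_eq_zero S)
  refine ⟨fun ⟨n, h₁, h₂⟩ => ⟨φ n, hpos h₁, hpos h₂⟩, ?_, ?_⟩
  · rintro π f ⟨n, hn, hl⟩
    exact ⟨φ n, hpos hn, by rw [hom.lab_eq n (by rw [hl]; exact Option.some_ne_none f), hl]⟩
  · rintro π f ⟨n, hn, hl⟩ π'
    have hacy := Set.ext_iff.mp (hrig n (by rw [hl]; exact Option.some_ne_none f))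
    constructor
    · rintro ⟨hal, hπ'⟩
      obtain ⟨hπ'n, hπ'⟩ := (hacy π').mp ⟨isPos_of_aliases (aliases_symm hal) hn, hπ'⟩
      exact ⟨⟨φ n, hπ'n, hpos hn⟩, hπ'⟩
    · rintro ⟨hal, hπ'⟩
      obtain ⟨hπ'n, hπ'⟩ :=
        (hacy π').mpr ⟨isPos_of_aliases (aliases_symm hal) (hpos hn), hπ'⟩
      exact ⟨⟨n, hπ'n, hn⟩, hπ'⟩

theorem PosLe.leR {g h : CTG S.bot} (hgh : PosLe g h) : g.LeR h := by
  choose pos hpos using g.reach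
  choose φ hφ using fun n => hgh.aliases (aliases_refl (hpos n))
  have hφpos : ∀ {π n}, g.tg.IsPos π n → h.tg.IsPos π (φ n) := fun {π n} hπ => by
    obtain ⟨m, h₁, h₂⟩ := hgh.aliases ⟨n, hπ, hpos n⟩
    rwa [TermGraph.isPos_unique h₂ (hφ n).1] at h₁
  have hlab : ∀ n f, g.tg.lab n = some f → h.tg.lab (φ n) = some f := fun n f hf => by
    obtain ⟨m, hm, hl⟩ := hgh.memLab ⟨n, hpos n, hf⟩
    rwa [TermGraph.isPos_unique hm (hφ n).1] at hl
  refine ⟨φ, ⟨TermGraph.eq_root_of_isPos_nil (hφpos .root), ?_, ?_⟩, ?_⟩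
  · intro n hn
    obtain ⟨f, hf⟩ := Option.ne_none_iff_exists'.mp hn
    rw [hf, hlab n f hf]
  · intro n _ i hi hi'
    exact TermGraph.isPos_unique (hφpos ((hpos n).step ⟨i, hi⟩))
      ((hφpos (hpos n)).step ⟨i, hi'⟩)
  · intro n hn
    obtain ⟨f, hf⟩ := Option.ne_none_iff_exists'.mp hn
    ext π'
    constructor
    · rintro ⟨hπ', hacy⟩
      obtain ⟨⟨m, h₁, h₂⟩, hacy⟩ :=
        (hgh.rigid ⟨n, hpos n, hf⟩ π').mp ⟨⟨n, hπ', hpos n⟩, hacy⟩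
      rw [TermGraph.isPos_unique h₂ (hφpos (hpos n))] at h₁
      exact ⟨h₁, hacy⟩
    · rintro ⟨hπ', hacy⟩
      obtain ⟨⟨m, h₁, h₂⟩, hacy⟩ :=
        (hgh.rigid ⟨n, hpos n, hf⟩ π').mpr ⟨⟨φ n, hπ', hφpos (hpos n)⟩, hacy⟩
      rw [TermGraph.isPos_unique h₂ (hpos n)] at h₁
      exact ⟨h₁, hacy⟩

theorem leR_refl (g : CTG S.bot) : g.LeR g :=
  ⟨id, ⟨rfl, fun _ _ => rfl, fun _ _ _ _ _ => rfl⟩, fun _ _ => rfl⟩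

theorem leR_trans {g h k : CTG S.bot} (hgh : g.LeR h) (hhk : h.LeR k) : g.LeR k :=
  (hgh.posLe.trans hhk.posLe).leR

section Antisymm

variable {Δ : Set S.Sym} {g h : CTG S}

theorem subset_of_isDHom (hΔ : ∀ s ∈ Δ, S.ar s = 0) {φ : g.nodes → h.nodes}
    (hφ : TermGraph.IsDHom Δ g.tg h.tg φ) (n : g.nodes) : (n : Set (List ℕ)) ⊆ φ n :=
  fun π hπ => (h.mem_iff_isPos _ π).mpr (hφ.isPos hΔ ((g.mem_iff_isPos n π).mp hπ))

theorem coe_eq_of_isDHom (hΔ : ∀ s ∈ Δ, S.ar s = 0) {φ : g.nodes → h.nodes}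
    {ψ : h.nodes → g.nodes} (hφ : TermGraph.IsDHom Δ g.tg h.tg φ)
    (hψ : TermGraph.IsDHom Δ h.tg g.tg ψ) (n : g.nodes) : (φ n : Set (List ℕ)) = n := by
  have hψφ : ψ (φ n) = n := by
    obtain ⟨π, hπ⟩ := g.reach n
    have hπ' :=
      subset_of_isDHom hΔ hψ _ (subset_of_isDHom hΔ hφ n ((g.mem_iff_isPos n π).mpr hπ))
    exact TermGraph.isPos_unique ((g.mem_iff_isPos _ π).mp hπ') hπ
  refine Set.Subset.antisymm ?_ (subset_of_isDHom hΔ hφ n)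
  simpa only [hψφ] using subset_of_isDHom hΔ hψ (φ n)

end Antisymm

theorem leR_antisymm {g h : CTG S.bot} (hgh : g.LeR h) (hhg : h.LeR g) : g = h := by
  obtain ⟨φ, hφ, -⟩ := hgh
  obtain ⟨ψ, hψ, -⟩ := hhg
  have hφn := coe_eq_of_isDHom (Signature.bot_ar_eq_zero S) hφ hψ
  have hψm := coe_eq_of_isDHom (Signature.bot_ar_eq_zero S) hψ hφ
  refine ext_of_lab (Set.ext fun s => ⟨fun hs => ?_, fun hs => ?_⟩) fun n m hnm => ?_
  · simpa only [hφn] using (φ ⟨s, hs⟩).2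
  · simpa only [hψm] using (ψ ⟨s, hs⟩).2
  · have hφ' : φ n = m := Subtype.ext ((hφn n).trans hnm)
    have hψ' : ψ m = n := Subtype.ext ((hψm m).trans hnm.symm)
    by_cases hn : g.tg.lab n = none
    · by_cases hm : h.tg.lab m = none
      · rw [hn, hm]
      · rw [← hψ.lab_eq m hm, hψ']
    · rw [← hφ.lab_eq n hn, hφ']

end CTG

namespace LQT

variable {S : Signature} (T : LQT S)

def cls (π : List ℕ) : Set (List ℕ) := {π' | T.rel π π'}

variable {T}

theorem cls_eq {π π' : List ℕ} (h : T.rel π π') : T.cls π = T.cls π' :=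
  Set.ext fun _ => ⟨T.rel_trans _ _ _ (T.rel_symm _ _ h), T.rel_trans _ _ _ h⟩

theorem rel_of_cls_eq {π π' : List ℕ} (hπ' : π' ∈ T.P) (h : T.cls π = T.cls π') :
    T.rel π π' :=
  show π' ∈ T.cls π from h ▸ T.rel_refl π' hπ'

theorem snoc_mem {π : List ℕ} {i : ℕ} (hπ : π ∈ T.P) (hi : i < S.ar (T.l π)) :
    π ++ [i] ∈ T.P :=
  (T.rel_mem _ _ (T.congr_suc π π i (T.rel_refl π hπ) hi)).1

theorem nil_mem : [] ∈ T.P := by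
  obtain ⟨π, hπ⟩ := T.nonempty
  induction π using List.reverseRecOn with
  | nil => exact hπ
  | append_singleton π i ih => exact ih (T.reach_mem π i hπ)

variable (T)

def nodes : Set (Set (List ℕ)) := {C | ∃ π ∈ T.P, C = T.cls π}

noncomputable def rep (n : T.nodes) : List ℕ := n.2.choose

theorem rep_mem (n : T.nodes) : T.rep n ∈ T.P := n.2.choose_spec.1

theorem coe_eq_cls_rep (n : T.nodes) : (n : Set (List ℕ)) = T.cls (T.rep n) :=
  n.2.choose_spec.2

noncomputable def toTermGraph : TermGraph S T.nodes where
  lab n := T.l (T.rep n)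
  suc n i := ⟨T.cls (T.rep n ++ [(i : ℕ)]), _, T.snoc_mem (T.rep_mem n) i.isLt, rfl⟩
  root := ⟨T.cls [], [], T.nil_mem, rfl⟩

variable {T}

theorem rel_rep {n : T.nodes} {π : List ℕ} (h : (n : Set (List ℕ)) = T.cls π)
    (hπ : π ∈ T.P) :
    T.rel (T.rep n) π :=
  rel_of_cls_eq hπ (by rw [← T.coe_eq_cls_rep n, h])

theorem toTermGraph_lab {n : T.nodes} {π : List ℕ} (h : (n : Set (List ℕ)) = T.cls π)
    (hπ : π ∈ T.P) : T.toTermGraph.lab n = T.l π :=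
  T.congr_lab _ _ (rel_rep h hπ)

theorem coe_toTermGraph_suc {n : T.nodes} {π : List ℕ} (h : (n : Set (List ℕ)) = T.cls π)
    (hπ : π ∈ T.P) (i : Fin (S.ar (T.toTermGraph.lab n))) :
    (T.toTermGraph.suc n i : Set (List ℕ)) = T.cls (π ++ [(i : ℕ)]) :=
  cls_eq (T.congr_suc _ _ _ (rel_rep h hπ) i.isLt)

theorem toTermGraph_isPos_iff {π : List ℕ} {n : T.nodes} :
    T.toTermGraph.IsPos π n ↔ π ∈ T.P ∧ (n : Set (List ℕ)) = T.cls π := by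
  constructor
  · intro h
    induction h with
    | root => exact ⟨T.nil_mem, rfl⟩
    | @step π m _ i ih =>
      obtain ⟨hπ, hm⟩ := ih
      have hi : (i : ℕ) < S.ar (T.l π) := toTermGraph_lab hm hπ ▸ i.isLt
      exact ⟨snoc_mem hπ hi, coe_toTermGraph_suc hm hπ i⟩
  · rintro ⟨hπ, hn⟩
    induction π using List.reverseRecOn generalizing n with
    | nil => exact (Subtype.ext hn : n = T.toTermGraph.root) ▸ .root
    | append_singleton π i ih =>
      have hπP : π ∈ T.P := T.reach_mem π i hπ
      let m : T.nodes := ⟨T.cls π, π, hπP, rfl⟩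
      have hi : i < S.ar (T.toTermGraph.lab m) := by
        rw [toTermGraph_lab rfl hπP]
        exact T.reach_ar π i hπ
      have hm : T.toTermGraph.suc m ⟨i, hi⟩ = n :=
        Subtype.ext ((coe_toTermGraph_suc rfl hπP ⟨i, hi⟩).trans hn.symm)
      exact hm ▸ (ih hπP rfl).step ⟨i, hi⟩

variable (T)

noncomputable def toCTG : CTG S where
  nodes := T.nodes
  tg := T.toTermGraph
  reach n := ⟨T.rep n, toTermGraph_isPos_iff.mpr ⟨T.rep_mem n, T.coe_eq_cls_rep n⟩⟩
  canon n := by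
    ext π
    change π ∈ (n : Set (List ℕ)) ↔ T.toTermGraph.IsPos π n
    rw [toTermGraph_isPos_iff, T.coe_eq_cls_rep n]
    exact ⟨fun h => ⟨(T.rel_mem _ _ h).2, cls_eq h⟩,
      fun ⟨hπ, h⟩ => rel_of_cls_eq hπ h⟩

variable {T}

theorem toCTG_aliases_iff {π π' : List ℕ} : T.toCTG.Aliases π π' ↔ T.rel π π' := by
  constructor
  · rintro ⟨n, h₁, h₂⟩
    obtain ⟨-, hn⟩ := toTermGraph_isPos_iff.mp h₁
    obtain ⟨hπ', hn'⟩ := toTermGraph_isPos_iff.mp h₂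
    exact rel_of_cls_eq hπ' (hn.symm.trans hn')
  · intro h
    obtain ⟨hπ, hπ'⟩ := T.rel_mem _ _ h
    exact ⟨⟨T.cls π, π, hπ, rfl⟩, toTermGraph_isPos_iff.mpr ⟨hπ, rfl⟩,
      toTermGraph_isPos_iff.mpr ⟨hπ', cls_eq h⟩⟩

theorem toCTG_memLab_iff {π : List ℕ} {v : S.Sym} :
    T.toCTG.MemLab π v ↔ π ∈ T.P ∧ T.l π = v := by
  constructor
  · rintro ⟨n, hn, rfl⟩
    obtain ⟨hπ, hn⟩ := toTermGraph_isPos_iff.mp hn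
    exact ⟨hπ, (toTermGraph_lab hn hπ).symm⟩
  · rintro ⟨hπ, rfl⟩
    exact ⟨⟨T.cls π, π, hπ, rfl⟩, toTermGraph_isPos_iff.mpr ⟨hπ, rfl⟩,
      toTermGraph_lab rfl hπ⟩

theorem toCTG_isAcyclicPos_iff {π : List ℕ} : T.toCTG.tg.IsAcyclicPos π ↔
    ∀ ρ₁ ρ₂, ρ₁ <+: ρ₂ → ρ₂ <+: π → T.rel ρ₁ ρ₂ → ρ₁ = ρ₂ := by
  refine forall_congr' fun ρ₁ => forall_congr' fun ρ₂ => ?_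
  constructor
  · intro h h₁ h₂ hrel
    obtain ⟨n, hn₁, hn₂⟩ := toCTG_aliases_iff.mpr hrel
    exact h n h₁ h₂ hn₁ hn₂
  · intro h n h₁ h₂ hn₁ hn₂
    exact h h₁ h₂ (toCTG_aliases_iff.mp ⟨n, hn₁, hn₂⟩)

end LQT

namespace CTG

variable (S : Signature)

def botLQT : LQT S.bot where
  P := {[]}
  nonempty := ⟨[], rfl⟩
  l _ := none
  rel π π' := π = [] ∧ π' = []
  rel_refl _ h := ⟨h, h⟩
  rel_symm _ _ h := ⟨h.2, h.1⟩
  rel_trans _ _ _ h h' := ⟨h.1, h'.2⟩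
  rel_mem _ _ h := h
  reach_mem _ _ h := by simp at h
  reach_ar _ _ h := by simp at h
  congr_lab _ _ _ := rfl
  congr_suc _ _ _ _ hi := absurd hi (Nat.not_lt_zero _)

noncomputable def botCTG : CTG S.bot := (botLQT S).toCTG

variable {S}

theorem botCTG_eq_root (n : (botCTG S).nodes) : n = (botCTG S).tg.root := by
  obtain ⟨_, rfl, hn⟩ := n.2
  exact Subtype.ext hn

theorem botCTG_lab_root : (botCTG S).tg.lab (botCTG S).tg.root = none := rfl

theorem botCTG_le (g : CTG S.bot) : (botCTG S).LeR g := by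
  have hlab : ∀ {π f}, ¬ (botCTG S).MemLab π (some f) := fun h =>
    Option.some_ne_none _ (LQT.toCTG_memLab_iff.mp h).2.symm
  refine PosLe.leR ⟨fun hal => ?_, fun h => (hlab h).elim, fun h => (hlab h).elim⟩
  obtain ⟨rfl, rfl⟩ := LQT.toCTG_aliases_iff.mp hal
  exact aliases_refl .root

/-- The congruence generated by the aliasings of the members of `A`. Successors are only
taken below a position that carries a non-`⊥` label in some member. -/
inductive JoinRel (A : Set (CTG S.bot)) : List ℕ → List ℕ → Prop
  | base {g : CTG S.bot} {π π' : List ℕ} : g ∈ A → g.Aliases π π' → JoinRel A π π'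
  | symm {π π' : List ℕ} : JoinRel A π π' → JoinRel A π' π
  | trans {π π' π'' : List ℕ} : JoinRel A π π' → JoinRel A π' π'' → JoinRel A π π''
  | snoc {g : CTG S.bot} {π π' χ : List ℕ} {f : S.Sym} {i : ℕ} : g ∈ A →
      JoinRel A π π' → JoinRel A π χ → g.MemLab χ (some f) → i < S.ar f →
      JoinRel A (π ++ [i]) (π' ++ [i])

def JoinAcyclic (A : Set (CTG S.bot)) (π : List ℕ) : Prop :=
  ∀ ρ₁ ρ₂, ρ₁ <+: ρ₂ → ρ₂ <+: π → JoinRel A ρ₁ ρ₂ → ρ₁ = ρ₂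

def JoinLabel (A : Set (CTG S.bot)) (π : List ℕ) (f : S.Sym) : Prop :=
  ∃ g ∈ A, ∃ χ, JoinRel A π χ ∧ g.MemLab χ (some f)

variable {A : Set (CTG S.bot)}

theorem JoinRel.refl_left {π π' : List ℕ} (h : JoinRel A π π') : JoinRel A π π :=
  h.trans h.symm

theorem JoinRel.refl_of_prefix {π π' : List ℕ} (h : JoinRel A π π') :
    ∀ ρ, ρ <+: π ∨ ρ <+: π' → JoinRel A ρ ρ := by
  induction h with
  | base hg hal =>
    obtain ⟨n, h₁, h₂⟩ := hal
    rintro ρ (hρ | hρ)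
    · obtain ⟨m, hm⟩ := TermGraph.exists_isPos_of_prefix h₁ hρ
      exact .base hg (aliases_refl hm)
    · obtain ⟨m, hm⟩ := TermGraph.exists_isPos_of_prefix h₂ hρ
      exact .base hg (aliases_refl hm)
  | symm _ ih => exact fun ρ hρ => ih ρ hρ.symm
  | trans _ _ ih ih' => exact fun ρ hρ => hρ.elim (ih ρ ∘ .inl) (ih' ρ ∘ .inr)
  | snoc hg h hχ hf hi ih =>
    rintro ρ (hρ | hρ) <;> rcases List.prefix_concat_iff.mp hρ with rfl | hρ
    · exact .snoc hg h.refl_left hχ hf hi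
    · exact ih ρ (.inl hρ)
    · exact .snoc hg h.symm.refl_left (h.symm.trans hχ) hf hi
    · exact ih ρ (.inr hρ)

theorem JoinRel.exists_joinLabel_of_snoc {α β π : List ℕ} {i : ℕ} (h : JoinRel A α β)
    (hπ : α = π ++ [i] ∨ β = π ++ [i]) : ∃ f, JoinLabel A π f ∧ i < S.ar f := by
  induction h with
  | @base g _ _ hg hal =>
    obtain ⟨n, h₁, h₂⟩ := hal
    obtain ⟨f, hf, hi⟩ : ∃ f, g.MemLab π (some f) ∧ i < S.ar f := by
      rcases hπ with rfl | rfl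
      exacts [exists_memLab_of_isPos_snoc h₁, exists_memLab_of_isPos_snoc h₂]
    exact ⟨f, ⟨g, hg, π, .base hg (aliases_refl hf.choose_spec.1), hf⟩, hi⟩
  | symm _ ih => exact ih hπ.symm
  | trans _ _ ih ih' => exact hπ.elim (ih ∘ .inl) (ih' ∘ .inr)
  | @snoc g _ _ χ f _ hg h hχ hf hi =>
    rcases hπ with hπ | hπ <;> obtain ⟨rfl, rfl⟩ := (by simpa using hπ : _ ∧ _)
    · exact ⟨f, ⟨g, hg, χ, hχ, hf⟩, hi⟩
    · exact ⟨f, ⟨g, hg, χ, h.symm.trans hχ, hf⟩, hi⟩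

theorem JoinRel.aliases_of_posLe {w : CTG S.bot} (hw : ∀ g ∈ A, PosLe g w) {α β : List ℕ}
    (h : JoinRel A α β) : w.Aliases α β := by
  induction h with
  | base hg hal => exact (hw _ hg).aliases hal
  | symm _ ih => exact aliases_symm ih
  | trans _ _ ih ih' => exact aliases_trans ih ih'
  | snoc hg _ _ hf hi ih ihχ =>
    exact aliases_snoc ih (memLab_of_aliases ihχ ((hw _ hg).memLab hf)) hi

theorem joinLabel_congr {π π' : List ℕ} (h : JoinRel A π π') {f : S.Sym} :
    JoinLabel A π f ↔ JoinLabel A π' f :=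
  ⟨fun ⟨g, hg, χ, hr, hf⟩ => ⟨g, hg, χ, h.symm.trans hr, hf⟩,
    fun ⟨g, hg, χ, hr, hf⟩ => ⟨g, hg, χ, h.trans hr, hf⟩⟩

/-- Conditions under which `join` is the least upper bound (`Coherent.isLubR_join`); directed
sets and sets bounded above satisfy them. -/
structure Coherent (A : Set (CTG S.bot)) : Prop where
  nonempty : A.Nonempty
  exists_posLe : ∀ {g g' : CTG S.bot} {π π' : List ℕ}, g ∈ A → g' ∈ A →
    JoinRel A π π' →
    ∃ w, PosLe g w ∧ PosLe g' w ∧ w.Aliases π π'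
  aliases_of_joinAcyclic : ∀ {g : CTG S.bot} {π π' : List ℕ} {f : S.Sym}, g ∈ A →
    g.MemLab π (some f) → JoinRel A π π' → JoinAcyclic A π' →
    g.Aliases π' π ∧ g.tg.IsAcyclicPos π'

namespace Coherent

theorem label_eq (hA : Coherent A) {π : List ℕ} {f f' : S.Sym} (hf : JoinLabel A π f)
    (hf' : JoinLabel A π f') : f = f' := by
  obtain ⟨g, hg, χ, hχ, hfχ⟩ := hf
  obtain ⟨g', hg', χ', hχ', hfχ'⟩ := hf'
  obtain ⟨w, hgw, hg'w, hal⟩ := hA.exists_posLe hg hg' (hχ.symm.trans hχ')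
  obtain ⟨n, hn, hl⟩ := hgw.memLab hfχ
  obtain ⟨n', hn', hl'⟩ := hg'w.memLab hfχ'
  rw [TermGraph.isPos_unique (isPos_of_aliases hal hn) hn', hl'] at hl
  exact Option.some_injective _ hl.symm

theorem joinAcyclic_of_isAcyclicPos (hA : Coherent A) {g : CTG S.bot} {π π' : List ℕ}
    {f : S.Sym} (hg : g ∈ A) (hf : g.MemLab π (some f)) (hal : g.Aliases π' π)
    (hacy : g.tg.IsAcyclicPos π') :
    JoinAcyclic A π' := by
  intro ρ₁ ρ₂ h₁ h₂ hrel
  obtain ⟨w, hgw, -, n, hn₁, hn₂⟩ := hA.exists_posLe hg hg hrel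
  exact ((hgw.rigid hf π').mp ⟨hal, hacy⟩).2 ρ₁ ρ₂ n h₁ h₂ hn₁ hn₂

end Coherent

open Classical in
noncomputable def joinLab (A : Set (CTG S.bot)) (π : List ℕ) : Option S.Sym :=
  if h : ∃ f, JoinLabel A π f then some h.choose else none

theorem Coherent.joinLab_eq_some (hA : Coherent A) {π : List ℕ} {f : S.Sym} :
    joinLab A π = some f ↔ JoinLabel A π f := by
  unfold joinLab
  split_ifs with h
  · exact Option.some_inj.trans ⟨fun he => he ▸ h.choose_spec, hA.label_eq h.choose_spec⟩
  · exact ⟨fun he => by simp at he, fun hf => (h ⟨f, hf⟩).elim⟩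

theorem Coherent.joinLab_congr (hA : Coherent A) {π π' : List ℕ} (h : JoinRel A π π') :
    joinLab A π = joinLab A π' :=
  Option.ext fun _ => by rw [hA.joinLab_eq_some, hA.joinLab_eq_some, joinLabel_congr h]

noncomputable def joinLQT (hA : Coherent A) : LQT S.bot where
  P := {π | JoinRel A π π}
  nonempty :=
    let ⟨_, hg⟩ := hA.nonempty
    ⟨[], .base hg (aliases_refl .root)⟩
  l := joinLab A
  rel := JoinRel A
  rel_refl _ h := h
  rel_symm _ _ h := h.symm
  rel_trans _ _ _ h h' := h.trans h'
  rel_mem _ _ h := ⟨h.refl_left, h.symm.refl_left⟩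
  reach_mem π i h := h.refl_of_prefix π (.inl (List.prefix_append π [i]))
  reach_ar π i h := by
    obtain ⟨f, hf, hi⟩ := h.exists_joinLabel_of_snoc (.inl rfl)
    rwa [hA.joinLab_eq_some.mpr hf]
  congr_lab _ _ h := hA.joinLab_congr h
  congr_suc π π' i h hi := by
    match hl : joinLab A π, hi with
    | some f, hi =>
      obtain ⟨g, hg, χ, hχ, hf⟩ := hA.joinLab_eq_some.mp hl
      exact .snoc hg h hχ hf hi

noncomputable def join (hA : Coherent A) : CTG S.bot := (joinLQT hA).toCTG

namespace Coherent

variable (hA : Coherent A)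

theorem join_aliases_iff {π π' : List ℕ} : (join hA).Aliases π π' ↔ JoinRel A π π' :=
  LQT.toCTG_aliases_iff

theorem join_memLab_iff {π : List ℕ} {f : S.Sym} :
    (join hA).MemLab π (some f) ↔ JoinLabel A π f :=
  LQT.toCTG_memLab_iff.trans ⟨fun h => hA.joinLab_eq_some.mp h.2,
    fun h => ⟨let ⟨_, _, _, hχ, _⟩ := h; hχ.refl_left, hA.joinLab_eq_some.mpr h⟩⟩

theorem join_isAcyclicPos_iff {π : List ℕ} : (join hA).tg.IsAcyclicPos π ↔ JoinAcyclic A π :=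
  LQT.toCTG_isAcyclicPos_iff

theorem posLe_join {g : CTG S.bot} (hg : g ∈ A) : PosLe g (join hA) where
  aliases hal := (join_aliases_iff hA).mpr (.base hg hal)
  memLab hf :=
    (join_memLab_iff hA).mpr ⟨_, hg, _, .base hg (aliases_refl hf.choose_spec.1), hf⟩
  rigid hf π' := by
    rw [join_aliases_iff, join_isAcyclicPos_iff]
    exact ⟨fun ⟨hal, hacy⟩ =>
        ⟨.base hg hal, hA.joinAcyclic_of_isAcyclicPos hg hf hal hacy⟩,
      fun ⟨hrel, hacy⟩ => hA.aliases_of_joinAcyclic hg hf hrel.symm hacy⟩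

theorem join_posLe {w : CTG S.bot} (hw : IsUB A w) : PosLe (join hA) w := by
  have hw' : ∀ g ∈ A, PosLe g w := fun g hg => (hw g hg).posLe
  refine ⟨fun hal => ((join_aliases_iff hA).mp hal).aliases_of_posLe hw', fun hf => ?_, ?_⟩
  · obtain ⟨g, hg, χ, hχ, hfχ⟩ := (join_memLab_iff hA).mp hf
    exact memLab_of_aliases (hχ.aliases_of_posLe hw') ((hw' g hg).memLab hfχ)
  · intro π f hf π'
    obtain ⟨g, hg, χ, hχ, hfχ⟩ := (join_memLab_iff hA).mp hf
    rw [aliases_comm_iff ((join_aliases_iff hA).mpr hχ),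
      aliases_comm_iff (hχ.aliases_of_posLe hw')]
    exact ((hA.posLe_join hg).rigid hfχ π').symm.trans ((hw' g hg).rigid hfχ π')

theorem isLubR_join : IsLubR A (join hA) :=
  ⟨fun _ hg => (hA.posLe_join hg).leR, fun _ hw => (hA.join_posLe hw).leR⟩

end Coherent

theorem DirectedR.exists_posLe {D : Set (CTG S.bot)} (hD : DirectedR D) {g h : CTG S.bot}
    (hg : g ∈ D) (hh : h ∈ D) : ∃ k ∈ D, PosLe g k ∧ PosLe h k :=
  let ⟨k, hk, hgk, hhk⟩ := hD.2 g hg h hh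
  ⟨k, hk, hgk.posLe, hhk.posLe⟩

theorem DirectedR.exists_aliases_of_joinRel {D : Set (CTG S.bot)} (hD : DirectedR D)
    {α β : List ℕ} (h : JoinRel D α β) : ∃ k ∈ D, k.Aliases α β := by
  induction h with
  | base hg hal => exact ⟨_, hg, hal⟩
  | symm _ ih =>
    obtain ⟨k, hk, hal⟩ := ih
    exact ⟨k, hk, aliases_symm hal⟩
  | trans _ _ ih ih' =>
    obtain ⟨k₁, hk₁, hal₁⟩ := ih
    obtain ⟨k₂, hk₂, hal₂⟩ := ih'
    obtain ⟨k, hk, hk₁k, hk₂k⟩ := hD.exists_posLe hk₁ hk₂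
    exact ⟨k, hk, aliases_trans (hk₁k.aliases hal₁) (hk₂k.aliases hal₂)⟩
  | snoc hg _ _ hf hi ih ihχ =>
    obtain ⟨k₁, hk₁, hal₁⟩ := ih
    obtain ⟨k₂, hk₂, hal₂⟩ := ihχ
    obtain ⟨k₁₂, hk₁₂, hk₁k₁₂, hk₂k₁₂⟩ := hD.exists_posLe hk₁ hk₂
    obtain ⟨k, hk, hk₁₂k, hgk⟩ := hD.exists_posLe hk₁₂ hg
    have hf' := memLab_of_aliases ((hk₂k₁₂.trans hk₁₂k).aliases hal₂) (hgk.memLab hf)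
    exact ⟨k, hk, aliases_snoc ((hk₁k₁₂.trans hk₁₂k).aliases hal₁) hf' hi⟩

theorem DirectedR.coherent {D : Set (CTG S.bot)} (hD : DirectedR D) : Coherent D := by
  refine ⟨hD.1, fun hg hg' hrel => ?_, fun hg hf hrel hacy => ?_⟩
  · obtain ⟨k₀, hk₀, hal⟩ := hD.exists_aliases_of_joinRel hrel
    obtain ⟨k₁, hk₁, hgk₁, hg'k₁⟩ := hD.exists_posLe hg hg'
    obtain ⟨k, -, hk₀k, hk₁k⟩ := hD.exists_posLe hk₀ hk₁
    exact ⟨k, hgk₁.trans hk₁k, hg'k₁.trans hk₁k, hk₀k.aliases hal⟩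
  · obtain ⟨k₀, hk₀, hal⟩ := hD.exists_aliases_of_joinRel hrel
    obtain ⟨k, hk, hk₀k, hgk⟩ := hD.exists_posLe hk₀ hg
    have hacy' : k.tg.IsAcyclicPos _ := fun ρ₁ ρ₂ n h₁ h₂ hn₁ hn₂ =>
      hacy ρ₁ ρ₂ h₁ h₂ (.base hk ⟨n, hn₁, hn₂⟩)
    exact (hgk.rigid hf _).mpr ⟨aliases_symm (hk₀k.aliases hal), hacy'⟩

/-- By induction on `π`: a proper prefix aliased to `π` in `u` is, by rigidity of `u` at the
label of `π`, aliased to it in a member of `A`, hence related to it by `JoinRel`. -/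
theorem isAcyclicPos_of_joinAcyclic {A : Set (CTG S.bot)} {u : CTG S.bot}
    (hu : ∀ g ∈ A, PosLe g u) {π : List ℕ} {f : S.Sym} (hf : JoinLabel A π f)
    (hacy : JoinAcyclic A π) : u.tg.IsAcyclicPos π := by
  induction π using List.reverseRecOn generalizing f with
  | nil => exact TermGraph.isAcyclicPos_nil
  | append_singleton τ j ih =>
    obtain ⟨g, hg, χ, hχ, hfχ⟩ := hf
    obtain ⟨f₀, hτ, -⟩ := hχ.exists_joinLabel_of_snoc (.inl rfl)
    have hτu : u.tg.IsAcyclicPos τ := ih hτ fun ρ₁ ρ₂ h₁ h₂ =>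
      hacy ρ₁ ρ₂ h₁ (h₂.trans (List.prefix_append τ [j]))
    intro ρ₁ ρ₂ n h₁ h₂ hn₁ hn₂
    rcases List.prefix_concat_iff.mp h₂ with rfl | h₂
    · rcases List.prefix_concat_iff.mp h₁ with rfl | h₁
      · rfl
      · have hal : u.Aliases ρ₁ χ :=
          aliases_trans ⟨n, hn₁, hn₂⟩ (hχ.aliases_of_posLe hu)
        have hgal := ((hu g hg).rigid hfχ ρ₁).mpr ⟨hal, hτu.prefix h₁⟩
        exact hacy ρ₁ _ (h₁.trans (List.prefix_append τ [j])) (List.prefix_refl _)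
          ((JoinRel.base hg hgal.1).trans hχ.symm)
    · exact hτu ρ₁ ρ₂ n h₁ h₂ hn₁ hn₂

theorem coherent_of_isUB {A : Set (CTG S.bot)} {u : CTG S.bot} (hne : A.Nonempty)
    (hu : IsUB A u) : Coherent A := by
  have hu' : ∀ g ∈ A, PosLe g u := fun g hg => (hu g hg).posLe
  refine ⟨hne, fun hg hg' hrel => ⟨u, hu' _ hg, hu' _ hg', hrel.aliases_of_posLe hu'⟩, ?_⟩
  intro g π π' f hg hf hrel hacy
  exact ((hu' g hg).rigid hf π').mpr ⟨aliases_symm (hrel.aliases_of_posLe hu'),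
    isAcyclicPos_of_joinAcyclic hu' ⟨g, hg, π, hrel.symm, hf⟩ hacy⟩

theorem isGlbR_of_isLubR_lowerBounds {B : Set (CTG S.bot)} {l : CTG S.bot}
    (h : IsLubR {m | IsLB B m} l) : IsGlbR B l :=
  ⟨fun b hb => h.2 b fun _ hm => hm b hb, fun m hm => h.1 m hm⟩

end CTG

/-- The set of canonical partial term graphs over a signature
`Σ`, partially ordered by the rigid partial order `≤⊥r`, forms a complete
semilattice: it is a cpo (with least element the one-node term graph `⊥`) in
which every non-empty subset has a greatest lower bound. -/
theorem rigid_order_complete_semilattice (S : Signature) :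
    (∀ g : CTG S.bot, CTG.LeR g g) ∧
    (∀ g h k : CTG S.bot, CTG.LeR g h → CTG.LeR h k → CTG.LeR g k) ∧
    (∀ g h : CTG S.bot, CTG.LeR g h → CTG.LeR h g → g = h) ∧
    (∃ bot : CTG S.bot, (∀ n : ↥bot.nodes, n = bot.tg.root) ∧
        bot.tg.lab bot.tg.root = none ∧ ∀ g : CTG S.bot, CTG.LeR bot g) ∧
    (∀ D : Set (CTG S.bot), CTG.DirectedR D → ∃ u, CTG.IsLubR D u) ∧
    (∀ B : Set (CTG S.bot), B.Nonempty → ∃ l, CTG.IsGlbR B l) := by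
  refine ⟨CTG.leR_refl, fun _ _ _ => CTG.leR_trans, fun _ _ => CTG.leR_antisymm,
    ⟨CTG.botCTG S, CTG.botCTG_eq_root, CTG.botCTG_lab_root, CTG.botCTG_le⟩,
    fun D hD => ⟨_, hD.coherent.isLubR_join⟩, fun B ⟨b, hb⟩ => ?_⟩
  have hA : CTG.Coherent {m | CTG.IsLB B m} :=
    CTG.coherent_of_isUB ⟨CTG.botCTG S, fun g _ => CTG.botCTG_le g⟩ fun _ hm => hm b hb
  exact ⟨_, CTG.isGlbR_of_isLubR_lowerBounds hA.isLubR_join⟩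

end TGR
end

section
/- The pair (total canonical term graphs over Σ, d†) is an ultrametric space: d†(g,h) = 0 iff g = h, d†(g,h) = d†(h,g), and d†(g₁,g₃) ≤ max{d†(g₁,g₂), d†(g₂,g₃)} for all total canonical term graphs g, h, g₁, g₂, g₃. -/
set_option autoImplicit false

/-!
`sim†(g,h)` is the supremum of the depths `d ≤ ω` with `g†d ≅ h†d`, and the whole proof
rests on this set of depths being downward closed. Truncation is invariant under isomorphism,
and `(g†d)†e ≅ g†e` for `e ≤ d`: a retained node of `g` keeps its depth, its acyclic
positions and its acyclic predecessors in `g†d`, so truncating `g†d` at depth `e` retains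
exactly the nodes of `g` retained at depth `e`, together with those fringe nodes `n^i` of
`g†d` with `depth n + 1 < e`, which become the fringe nodes `n^i` of `g†e`.
Downward closure and transitivity of `≅` give `min (sim†(g₁,g₂)) (sim†(g₂,g₃)) ≤ sim†(g₁,g₃)`,
which is the strong triangle inequality because `s ↦ 2^{-s}` is antitone.
If `sim†(g,h) = ω` then `g†d ≅ h†d` for every finite `d`; positions shorter than `d`, their
aliasing and their labels are the same in `g†d` as in `g`, and a canonical term graph is
determined by its aliasing and labels, so `g = h`.
-/

namespace TGR
namespace TermGraph

-- Lets `rw` and `simp` match nodes written `⟨Sum.inl n, hn⟩` against the type `TNode g d`.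
attribute [reducible] TNode

variable {S : Signature} {N M K : Type}

section Positions

variable {g : TermGraph S N} {π π' σ σ' τ : List ℕ} {m n n' : N}

theorem IsPos.eq_root (h : g.IsPos [] n) : n = g.root := by
  generalize hπ : ([] : List ℕ) = π at h
  cases h with
  | root => rfl
  | step _ i => simp at hπ

theorem IsPos.of_snoc {i : ℕ} (h : g.IsPos (π ++ [i]) n) :
    ∃ (m : N) (hi : i < S.ar (g.lab m)), g.IsPos π m ∧ n = g.suc m ⟨i, hi⟩ := by
  generalize hπ : π ++ [i] = ρ at h
  cases h with
  | root => simp at hπ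
  | step h j =>
    obtain ⟨rfl, hij⟩ := List.append_inj' hπ rfl
    obtain rfl : i = j := List.singleton_inj.mp hij
    exact ⟨_, j.isLt, h, rfl⟩

theorem IsPos.unique (h : g.IsPos π n) (h' : g.IsPos π n') : n = n' := by
  induction h generalizing n' with
  | root => exact h'.eq_root.symm
  | step _ i ih =>
    obtain ⟨m, hi, hm, rfl⟩ := h'.of_snoc
    obtain rfl := ih hm
    rfl

theorem IsPos.exists_of_prefix (h : g.IsPos π n) (hp : π' <+: π) : ∃ m, g.IsPos π' m := by
  induction h generalizing π' with
  | root => obtain rfl := List.prefix_nil.mp hp; exact ⟨_, IsPos.root⟩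
  | step h i ih =>
    rcases List.prefix_concat_iff.mp hp with rfl | hp
    exacts [⟨_, h.step i⟩, ih hp]

theorem IsAcyclicPos.of_prefix (h : g.IsAcyclicPos π) (hp : π' <+: π) : g.IsAcyclicPos π' :=
  fun π₁ π₂ n h₁ h₂ => h π₁ π₂ n h₁ (h₂.trans hp)

theorem IsPos.transplant (hσ : g.IsPos σ m) (h : g.IsPos (σ ++ τ) n) (hσ' : g.IsPos σ' m) :
    g.IsPos (σ' ++ τ) n := by
  induction τ using List.reverseRecOn generalizing n with
  | nil =>
    rw [List.append_nil] at h ⊢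
    exact hσ.unique h ▸ hσ'
  | append_singleton τ i ih =>
    rw [← List.append_assoc] at h ⊢
    obtain ⟨k, hi, hk, rfl⟩ := h.of_snoc
    exact (ih hk).step ⟨i, hi⟩

theorem depth_le_length (h : g.IsPos π n) : g.depth n ≤ π.length :=
  Nat.sInf_le ⟨π, h, rfl⟩

/-- Cutting a cycle out of a position shortens it, so shortest positions are acyclic. -/
theorem IsPos.exists_acyclic_length_eq_depth (h : g.IsPos π n) :
    ∃ ρ, g.IsPos ρ n ∧ g.IsAcyclicPos ρ ∧ ρ.length = g.depth n := by
  obtain ⟨ρ, hρ, hlen⟩ : g.depth n ∈ {k | ∃ ρ, g.IsPos ρ n ∧ ρ.length = k} :=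
    Nat.sInf_mem ⟨_, π, h, rfl⟩
  refine ⟨ρ, hρ, fun π₁ π₂ m h₁ ⟨τ, hτ⟩ p₁ p₂ => h₁.eq_of_length ?_, hlen⟩
  subst hτ
  have := depth_le_length (p₂.transplant hρ p₁)
  simp only [List.length_append] at this hlen
  exact le_antisymm h₁.length_le (by omega)

theorem nodeAt_eq (h : g.IsPos π n) : g.nodeAt π = n := by
  rw [nodeAt, dif_pos ⟨n, h⟩]
  exact (Exists.choose_spec ⟨n, h⟩).unique h

theorem labAt_eq (h : g.IsPos π n) : g.labAt π = g.lab n := by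
  rw [labAt, nodeAt_eq h]

theorem nodePos_eq_setOf_aliases (h : g.IsPos π n) : g.nodePos n = {π' | g.Aliases π' π} :=
  Set.ext fun _ => ⟨fun h' => ⟨n, h', h⟩, fun ⟨_, h₁, h₂⟩ => h₂.unique h ▸ h₁⟩

theorem Reachable.exists_acyclic_length_eq_depth (hR : g.Reachable) (n : N) :
    ∃ ρ, g.IsPos ρ n ∧ g.IsAcyclicPos ρ ∧ ρ.length = g.depth n :=
  let ⟨_, hπ⟩ := hR n
  hπ.exists_acyclic_length_eq_depth

theorem suc_congr (h : m = n) {i : ℕ} (hi : i < S.ar (g.lab m)) (hi' : i < S.ar (g.lab n)) :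
    g.suc m ⟨i, hi⟩ = g.suc n ⟨i, hi'⟩ := by
  subst h
  rfl

end Positions

theorem ext_of_isPos_iff {g h : TermGraph S N} (hR : g.Reachable)
    (hpos : ∀ π n, g.IsPos π n ↔ h.IsPos π n) (hlab : ∀ n, g.lab n = h.lab n) : g = h := by
  obtain ⟨lab, suc, root⟩ := g
  obtain ⟨lab', suc', root'⟩ := h
  obtain rfl : lab = lab' := funext hlab
  obtain rfl : root = root' := ((hpos [] root).mp IsPos.root).eq_root
  obtain rfl : suc = suc' := by
    funext n i
    obtain ⟨π, hπ⟩ := hR n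
    exact ((hpos _ _).mp (hπ.step i)).unique (((hpos π n).mp hπ).step i)
  rfl

section Hom

variable {g : TermGraph S N} {h : TermGraph S M} {k : TermGraph S K} {φ : N → M}
  {π : List ℕ} {m n : N}

theorem IsDHom.lab_apply (hφ : IsDHom ∅ g h φ) (n : N) : h.lab (φ n) = g.lab n :=
  hφ.lab_eq n (Set.notMem_empty _)

theorem IsDHom.suc_apply (hφ : IsDHom ∅ g h φ) (n : N) {i : ℕ} (hi : i < S.ar (g.lab n))
    (hi' : i < S.ar (h.lab (φ n))) : φ (g.suc n ⟨i, hi⟩) = h.suc (φ n) ⟨i, hi'⟩ :=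
  hφ.suc_eq n (Set.notMem_empty _) i hi hi'

theorem IsDHom.isPos_s2 (hφ : IsDHom ∅ g h φ) (hp : g.IsPos π n) : h.IsPos π (φ n) := by
  induction hp with
  | root => exact hφ.root_eq ▸ .root
  | @step π n _ i ih =>
    rw [hφ.suc_apply n i.isLt (by rw [hφ.lab_apply]; exact i.isLt)]
    exact ih.step ⟨(i : ℕ), _⟩

theorem IsDHom.isAcyclicPos (hφ : IsDHom ∅ g h φ) (ha : h.IsAcyclicPos π) :
    g.IsAcyclicPos π :=
  fun π₁ π₂ n h₁ h₂ p₁ p₂ => ha π₁ π₂ (φ n) h₁ h₂ (hφ.isPos_s2 p₁) (hφ.isPos_s2 p₂)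

theorem IsDHom.comp {ψ : M → K} (hφ : IsDHom ∅ g h φ) (hψ : IsDHom ∅ h k ψ) :
    IsDHom ∅ g k (ψ ∘ φ) where
  root_eq := by simp [hφ.root_eq, hψ.root_eq]
  lab_eq n _ := by simp [hψ.lab_apply, hφ.lab_apply]
  suc_eq n _ i hi hi' := by
    have hi₁ : i < S.ar (h.lab (φ n)) := by rwa [hφ.lab_apply]
    simp only [Function.comp_apply, hφ.suc_apply n hi hi₁, hψ.suc_apply _ hi₁ hi']

theorem IsDHom.symm {e : N ≃ M} (he : IsDHom ∅ g h e) : IsDHom ∅ h g e.symm where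
  root_eq := by rw [← he.root_eq, Equiv.symm_apply_apply]
  lab_eq m _ := by rw [← he.lab_apply, Equiv.apply_symm_apply]
  suc_eq m _ i hi hi' := by
    obtain ⟨n, rfl⟩ := e.surjective m
    rw [← he.suc_apply n (by rwa [he.lab_apply] at hi) hi, Equiv.symm_apply_apply]
    exact suc_congr (e.symm_apply_apply n).symm _ _

theorem iso_iff_exists_equiv : Iso g h ↔ ∃ e : N ≃ M, IsDHom ∅ g h e :=
  ⟨fun ⟨φ, ψ, hφ, _, hψφ, hφψ⟩ => ⟨⟨φ, ψ, hψφ, hφψ⟩, hφ⟩,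
    fun ⟨e, he⟩ => ⟨e, e.symm, he, he.symm, e.symm_apply_apply, e.apply_symm_apply⟩⟩

theorem Iso.refl (g : TermGraph S N) : Iso g g :=
  iso_iff_exists_equiv.mpr ⟨Equiv.refl N, ⟨rfl, fun _ _ => rfl, fun _ _ _ _ _ => rfl⟩⟩

theorem Iso.symm (hi : Iso g h) : Iso h g :=
  let ⟨φ, ψ, hφ, hψ, hψφ, hφψ⟩ := hi
  ⟨ψ, φ, hψ, hφ, hφψ, hψφ⟩

theorem Iso.trans (hi : Iso g h) (hi' : Iso h k) : Iso g k := by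
  obtain ⟨e, he⟩ := iso_iff_exists_equiv.mp hi
  obtain ⟨e', he'⟩ := iso_iff_exists_equiv.mp hi'
  exact iso_iff_exists_equiv.mpr ⟨e.trans e', he.comp he'⟩

theorem Iso.aliases_iff (hi : Iso g h) {π π' : List ℕ} : g.Aliases π π' ↔ h.Aliases π π' := by
  obtain ⟨φ, ψ, hφ, hψ, -⟩ := hi
  exact ⟨fun ⟨n, h₁, h₂⟩ => ⟨φ n, hφ.isPos_s2 h₁, hφ.isPos_s2 h₂⟩,
    fun ⟨m, h₁, h₂⟩ => ⟨ψ m, hψ.isPos_s2 h₁, hψ.isPos_s2 h₂⟩⟩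

theorem Iso.labAt_eq (hi : Iso g h) (hπ : π ∈ g.pos) : g.labAt π = h.labAt π := by
  obtain ⟨φ, -, hφ, -⟩ := hi
  obtain ⟨n, hn⟩ := hπ
  rw [TermGraph.labAt_eq hn, TermGraph.labAt_eq (hφ.isPos_s2 hn), hφ.lab_apply]

end Hom

section Transport

variable {g : TermGraph S N} {h : TermGraph S M} {e : N ≃ M} (he : IsDHom ∅ g h e)
  {π : List ℕ} {d : ℕ} {m n : N}
include he

theorem IsDHom.isPos_apply_iff : h.IsPos π (e n) ↔ g.IsPos π n :=
  ⟨fun hp => by simpa using he.symm.isPos_s2 hp, he.isPos_s2⟩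

theorem IsDHom.isAcyclicPos_iff : h.IsAcyclicPos π ↔ g.IsAcyclicPos π :=
  ⟨he.isAcyclicPos, he.symm.isAcyclicPos⟩

theorem IsDHom.depth_apply : h.depth (e n) = g.depth n := by
  simp only [depth, he.isPos_apply_iff]

theorem IsDHom.mem_acyPred_apply_iff : e m ∈ h.acyPred (e n) ↔ m ∈ g.acyPred n := by
  simp only [acyPred, nodePosAcy, Set.mem_ofPred_eq, he.isPos_apply_iff, he.isAcyclicPos_iff]

theorem IsDHom.retained_apply (hr : g.Retained d n) : h.Retained d (e n) := by
  induction hr with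
  | shallow hd => exact .shallow (by rwa [he.depth_apply])
  | pred _ hm ih => exact ih.pred (he.mem_acyPred_apply_iff.mpr hm)

theorem IsDHom.retained_apply_iff : h.Retained d (e n) ↔ g.Retained d n :=
  ⟨fun hr => by simpa using he.symm.retained_apply hr, he.retained_apply⟩

end Transport

section Truncation

variable {g : TermGraph S.bot N} {d e : ℕ} {m n : N} {i : ℕ}

theorem Retained.ne_zero (h : g.Retained d n) : d ≠ 0 := by
  rintro rfl
  exact not_retained_zero n h

theorem Retained.mono (hed : e ≤ d) (h : g.Retained e n) : g.Retained d n := by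
  induction h with
  | shallow hn => exact .shallow (hn.trans_le hed)
  | pred _ hm ih => exact ih.pred hm

theorem retained_root (hd : d ≠ 0) : g.Retained d g.root :=
  .shallow ((depth_le_length IsPos.root).trans_lt (Nat.pos_of_ne_zero hd))

theorem isFringe_iff (hd : d ≠ 0) : g.IsFringe d (n, i) ↔ g.Retained d n ∧
    ∃ hi : i < S.bot.ar (g.lab n), ¬ g.Retained d (g.suc n ⟨i, hi⟩) ∨
      (d - 1 ≤ g.depth n ∧ n ∉ g.acyPred (g.suc n ⟨i, hi⟩)) := by
  rw [IsFringe, if_neg hd]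

theorem isFringe_iff_of_lt (hd : d ≠ 0) (hi : i < S.bot.ar (g.lab n)) :
    g.IsFringe d (n, i) ↔ g.Retained d n ∧ (¬ g.Retained d (g.suc n ⟨i, hi⟩) ∨
      (d - 1 ≤ g.depth n ∧ n ∉ g.acyPred (g.suc n ⟨i, hi⟩))) := by
  rw [isFringe_iff hd]
  exact and_congr_right fun _ => ⟨fun ⟨_, hc⟩ => hc, fun hc => ⟨hi, hc⟩⟩

theorem IsFringe.retained (hd : d ≠ 0) (hf : g.IsFringe d (n, i)) : g.Retained d n :=
  ((isFringe_iff hd).mp hf).1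

theorem IsFringe.lt_ar (hd : d ≠ 0) (hf : g.IsFringe d (n, i)) : i < S.bot.ar (g.lab n) :=
  ((isFringe_iff hd).mp hf).2.1

theorem retained_suc_of_not_isFringe (hn : g.Retained d n) (hi : i < S.bot.ar (g.lab n))
    (hnf : ¬ g.IsFringe d (n, i)) : g.Retained d (g.suc n ⟨i, hi⟩) := by
  by_contra hs
  exact hnf ((isFringe_iff hn.ne_zero).mpr ⟨hn, hi, .inl hs⟩)

theorem not_isFringe_of_retained_suc {hi : i < S.bot.ar (g.lab n)}
    (hs : g.Retained d (g.suc n ⟨i, hi⟩))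
    (h : g.depth n + 1 < d ∨ n ∈ g.acyPred (g.suc n ⟨i, hi⟩)) : ¬ g.IsFringe d (n, i) := by
  rw [isFringe_iff hs.ne_zero]
  rintro ⟨_, _, hc | ⟨hdep, hm⟩⟩
  exacts [hc hs, h.elim (fun h => by omega) hm]

theorem trunc_root (hd : d ≠ 0) : (g.trunc d).root = ⟨Sum.inl g.root, retained_root hd⟩ :=
  Subtype.ext (by simp [trunc, truncRoot, hd])

open Classical in
theorem trunc_suc_val (hn : g.Retained d n) (hi : i < S.bot.ar (g.lab n)) :
    ((g.trunc d).suc ⟨Sum.inl n, hn⟩ ⟨i, hi⟩).1 =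
      if g.IsFringe d (n, i) then Sum.inr (n, i) else Sum.inl (g.suc n ⟨i, hi⟩) := by
  by_cases hf : g.IsFringe d (n, i) <;> simp [trunc, truncSuc, hf]

theorem trunc_suc_of_isFringe (hn : g.Retained d n) (hi : i < S.bot.ar (g.lab n))
    (hf : g.IsFringe d (n, i)) :
    (g.trunc d).suc ⟨Sum.inl n, hn⟩ ⟨i, hi⟩ = ⟨Sum.inr (n, i), hf⟩ :=
  Subtype.ext (by rw [trunc_suc_val, if_pos hf])

theorem trunc_suc_of_not_isFringe (hn : g.Retained d n) (hi : i < S.bot.ar (g.lab n))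
    (hnf : ¬ g.IsFringe d (n, i)) :
    (g.trunc d).suc ⟨Sum.inl n, hn⟩ ⟨i, hi⟩ =
      ⟨Sum.inl (g.suc n ⟨i, hi⟩), retained_suc_of_not_isFringe hn hi hnf⟩ :=
  Subtype.ext (by rw [trunc_suc_val, if_neg hnf])

theorem trunc_zero_lab (x : TNode g 0) : (g.trunc 0).lab x = none := by
  obtain ⟨n | p, hx⟩ := x
  · exact (not_retained_zero n hx).elim
  · rfl

theorem trunc_zero_eq_root (x : TNode g 0) : x = (g.trunc 0).root := by
  obtain ⟨n | p, hx⟩ := x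
  · exact (not_retained_zero n hx).elim
  · obtain rfl : p = (g.root, 0) := by simpa [IsFringe] using hx
    exact Subtype.ext (by simp [trunc, truncRoot])

theorem isDHom_trunc_zero (g : TermGraph S.bot N) (h : TermGraph S.bot M) :
    IsDHom ∅ (g.trunc 0) (h.trunc 0) fun _ => (h.trunc 0).root where
  root_eq := rfl
  lab_eq x _ := by rw [trunc_zero_lab, trunc_zero_lab]
  suc_eq x _ i hi _ := absurd hi (by rw [trunc_zero_lab]; exact Nat.not_lt_zero i)

theorem trunc_zero_iso (g : TermGraph S.bot N) (h : TermGraph S.bot M) :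
    Iso (g.trunc 0) (h.trunc 0) :=
  ⟨_, _, isDHom_trunc_zero g h, isDHom_trunc_zero h g, fun x => (trunc_zero_eq_root x).symm,
    fun x => (trunc_zero_eq_root x).symm⟩

theorem IsFringe.mono (hed : e ≤ d) (he : e ≠ 0) (hf : g.IsFringe d (n, i))
    (hn : g.Retained e n) : g.IsFringe e (n, i) := by
  obtain ⟨-, hi, hc⟩ := (isFringe_iff (by omega)).mp hf
  refine (isFringe_iff he).mpr ⟨hn, hi, ?_⟩
  rcases hc with hc | ⟨hdep, hm⟩
  exacts [.inl fun hs => hc (hs.mono hed), .inr ⟨by omega, hm⟩]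

end Truncation

section TruncCongr

variable {g : TermGraph S.bot N} {h : TermGraph S.bot M} {e : N ≃ M} (he : IsDHom ∅ g h e)
  {d : ℕ} {n : N} {i : ℕ}
include he

theorem IsDHom.isFringe_apply_iff : h.IsFringe d (e n, i) ↔ g.IsFringe d (n, i) := by
  rcases eq_or_ne d 0 with rfl | hd
  · simp [IsFringe, ← he.root_eq]
  rw [isFringe_iff hd, isFringe_iff hd, he.retained_apply_iff]
  refine and_congr_right fun _ => ⟨fun ⟨hi, hc⟩ => ?_, fun ⟨hi, hc⟩ => ?_⟩
  · have hi' : i < S.bot.ar (g.lab n) := by rwa [he.lab_apply] at hi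
    rw [← he.suc_apply n hi' hi, he.retained_apply_iff, he.depth_apply,
      he.mem_acyPred_apply_iff] at hc
    exact ⟨hi', hc⟩
  · have hi' : i < S.bot.ar (h.lab (e n)) := by rwa [he.lab_apply]
    refine ⟨hi', ?_⟩
    rwa [← he.suc_apply n hi hi', he.retained_apply_iff, he.depth_apply,
      he.mem_acyPred_apply_iff]

def truncCongr (d : ℕ) : TNode g d ≃ TNode h d :=
  (e.sumCongr (e.prodCongr (Equiv.refl ℕ))).subtypeEquiv fun x => by
    rcases x with n | ⟨n, i⟩
    exacts [he.retained_apply_iff.symm, he.isFringe_apply_iff.symm]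

theorem IsDHom.trunc (d : ℕ) : IsDHom ∅ (g.trunc d) (h.trunc d) (truncCongr he d) where
  root_eq := by
    apply Subtype.ext
    show Sum.map e (Prod.map e id) (truncRoot g d).1 = (truncRoot h d).1
    by_cases hd : d = 0 <;> simp [truncRoot, hd, he.root_eq]
  lab_eq := by
    rintro ⟨n | p, hx⟩ -
    exacts [he.lab_apply n, rfl]
  suc_eq := by
    rintro ⟨n | p, hx⟩ - i hi hi'
    · apply Subtype.ext
      show Sum.map e (Prod.map e id) ((g.trunc d).suc ⟨Sum.inl n, hx⟩ ⟨i, hi⟩).1 =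
        ((h.trunc d).suc ⟨Sum.inl (e n), he.retained_apply hx⟩ ⟨i, hi'⟩).1
      rw [trunc_suc_val hx hi, trunc_suc_val (he.retained_apply hx) hi', he.isFringe_apply_iff]
      split_ifs <;> simp [he.suc_apply n hi hi']
    · exact absurd hi (Nat.not_lt_zero i)

end TruncCongr

theorem Iso.trunc {g : TermGraph S.bot N} {h : TermGraph S.bot M} (hi : Iso g h) (d : ℕ) :
    Iso (g.trunc d) (h.trunc d) := by
  obtain ⟨e, he⟩ := iso_iff_exists_equiv.mp hi
  exact iso_iff_exists_equiv.mpr ⟨truncCongr he d, he.trunc d⟩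

section TruncPositions

variable {g : TermGraph S.bot N} {d : ℕ} {π π' σ : List ℕ} {m n : N} {i : ℕ}

theorem trunc_isPos_snoc_of_not_isFringe {hm : g.Retained d m}
    (hp : (g.trunc d).IsPos π ⟨Sum.inl m, hm⟩) (hi : i < S.bot.ar (g.lab m))
    (hnf : ¬ g.IsFringe d (m, i)) :
    (g.trunc d).IsPos (π ++ [i])
      ⟨Sum.inl (g.suc m ⟨i, hi⟩), retained_suc_of_not_isFringe hm hi hnf⟩ := by
  simpa only [trunc_suc_of_not_isFringe hm hi hnf] using hp.step ⟨i, hi⟩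

theorem trunc_isPos_snoc_of_isFringe {hm : g.Retained d m}
    (hp : (g.trunc d).IsPos π ⟨Sum.inl m, hm⟩) (hi : i < S.bot.ar (g.lab m))
    (hf : g.IsFringe d (m, i)) : (g.trunc d).IsPos (π ++ [i]) ⟨Sum.inr (m, i), hf⟩ := by
  simpa only [trunc_suc_of_isFringe hm hi hf] using hp.step ⟨i, hi⟩

theorem IsPos.trunc_of_isAcyclicPos (hp : g.IsPos π n) (ha : g.IsAcyclicPos π)
    (hn : g.Retained d n) : (g.trunc d).IsPos π ⟨Sum.inl n, hn⟩ := by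
  induction hp with
  | root => exact trunc_root hn.ne_zero ▸ IsPos.root
  | @step π m hπ i ih =>
    have hmem : m ∈ g.acyPred (g.suc m i) := ⟨π, i, ⟨hπ.step i, ha⟩, hπ⟩
    exact trunc_isPos_snoc_of_not_isFringe (ih (ha.of_prefix (List.prefix_append _ _))
      (hn.pred hmem)) i.isLt (not_isFringe_of_retained_suc hn (.inr hmem))

theorem IsPos.trunc_of_length_lt (hp : g.IsPos π n) (hlt : π.length < d) :
    (g.trunc d).IsPos π ⟨Sum.inl n, .shallow ((depth_le_length hp).trans_lt hlt)⟩ := by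
  induction hp with
  | root => exact trunc_root (Nat.ne_zero_of_lt hlt) ▸ IsPos.root
  | @step π m hπ i ih =>
    have hs : g.Retained d (g.suc m i) := .shallow ((depth_le_length (hπ.step i)).trans_lt hlt)
    have := depth_le_length hπ
    simp only [List.length_append, List.length_singleton] at hlt
    exact trunc_isPos_snoc_of_not_isFringe (ih (by omega)) i.isLt
      (not_isFringe_of_retained_suc hs (.inl (by omega)))

theorem isPos_of_trunc_isPos (hd : d ≠ 0) {x : TNode g d} (hp : (g.trunc d).IsPos π x)
    (hx : x.1 = Sum.inl n) : g.IsPos π n := by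
  induction hp generalizing n with
  | root =>
    rw [trunc_root hd, Sum.inl.inj_iff] at hx
    exact hx ▸ IsPos.root
  | @step π y _ j ih =>
    obtain ⟨m | p, hy⟩ := y
    · rw [trunc_suc_val hy j.isLt] at hx
      split_ifs at hx
      obtain rfl := Sum.inl.inj hx
      exact (ih rfl).step j
    · exact absurd j.isLt (Nat.not_lt_zero _)

theorem trunc_isPos_of_val_inr (hd : d ≠ 0) {x : TNode g d} (hp : (g.trunc d).IsPos π x)
    (hx : x.1 = Sum.inr (n, i)) :
    ∃ σ hn, π = σ ++ [i] ∧ (g.trunc d).IsPos σ ⟨Sum.inl n, hn⟩ := by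
  rcases π.eq_nil_or_concat' with rfl | ⟨σ, j, rfl⟩
  · rw [hp.eq_root, trunc_root hd] at hx
    exact absurd hx Sum.inl_ne_inr
  obtain ⟨⟨m | p, hy⟩, hj, hσ, rfl⟩ := hp.of_snoc
  · rw [trunc_suc_val hy hj] at hx
    split_ifs at hx
    obtain ⟨rfl, rfl⟩ := Prod.mk.inj (Sum.inr.inj hx)
    exact ⟨σ, hy, rfl, hσ⟩
  · exact absurd hj (Nat.not_lt_zero _)

theorem exists_val_eq_inl_of_trunc_isPos {x : TNode g d} (hp : (g.trunc d).IsPos π x)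
    (hlt : π.length < d) : ∃ n, x.1 = Sum.inl n := by
  have hd : d ≠ 0 := Nat.ne_zero_of_lt hlt
  obtain ⟨n | ⟨n, i⟩, hx⟩ := x
  · exact ⟨n, rfl⟩
  obtain ⟨σ, hn, rfl, hσ⟩ := trunc_isPos_of_val_inr hd hp rfl
  have hσn := isPos_of_trunc_isPos hd hσ rfl
  have hi : i < S.bot.ar (g.lab n) := IsFringe.lt_ar hd hx
  have hdep := depth_le_length (hσn.step ⟨i, hi⟩)
  have := depth_le_length hσn
  simp only [List.length_append, List.length_singleton] at hlt hdep
  exact (not_isFringe_of_retained_suc (.shallow (by omega)) (.inl (by omega)) hx).elim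

end TruncPositions

section TruncAcyclic

variable {g : TermGraph S.bot N} {d : ℕ} {π π' σ : List ℕ} {m n : N} {i : ℕ}

theorem exists_val_eq_inl_of_isPos_prefix {x y : TNode g d} (hx : (g.trunc d).IsPos π x)
    (hy : (g.trunc d).IsPos π' y) (hpre : π' <+: π) (hne : π' ≠ π) : ∃ m, y.1 = Sum.inl m := by
  obtain ⟨_ | ⟨j, τ⟩, rfl⟩ := hpre
  · exact absurd (List.append_nil _).symm hne
  obtain ⟨z, hz⟩ := hx.exists_of_prefix (⟨τ, by simp⟩ : π' ++ [j] <+: π' ++ j :: τ)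
  obtain ⟨y', hj, hy', -⟩ := hz.of_snoc
  obtain rfl := hy'.unique hy
  revert hj
  obtain ⟨m | p, -⟩ := y'
  exacts [fun _ => ⟨m, rfl⟩, fun hj => absurd hj (Nat.not_lt_zero _)]

theorem exists_trunc_isPos_of_prefix (hd : d ≠ 0) {x : TNode g d}
    (hp : (g.trunc d).IsPos π x) (hx : x.1 = Sum.inl n) (hpre : π' <+: π)
    (hm : g.IsPos π' m) : ∃ z, (g.trunc d).IsPos π' z ∧ z.1 = Sum.inl m := by
  obtain ⟨z, hz⟩ := hp.exists_of_prefix hpre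
  obtain ⟨m', hm'⟩ : ∃ m', z.1 = Sum.inl m' := by
    by_cases hne : π' = π
    · subst hne
      exact ⟨n, hz.unique hp ▸ hx⟩
    · exact exists_val_eq_inl_of_isPos_prefix hp hz hpre hne
  exact ⟨z, hz, (isPos_of_trunc_isPos hd hz hm').unique hm ▸ hm'⟩

theorem IsAcyclicPos.trunc (hd : d ≠ 0) (ha : g.IsAcyclicPos π) :
    (g.trunc d).IsAcyclicPos π := by
  intro π₁ π₂ x h₁ h₂ p₁ p₂
  by_contra hne
  obtain ⟨m, hm⟩ := exists_val_eq_inl_of_isPos_prefix p₂ p₁ h₁ hne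
  exact hne (ha π₁ π₂ m h₁ h₂ (isPos_of_trunc_isPos hd p₁ hm) (isPos_of_trunc_isPos hd p₂ hm))

theorem isAcyclicPos_of_trunc (hd : d ≠ 0) {x : TNode g d} (hp : (g.trunc d).IsPos π x)
    (hx : x.1 = Sum.inl n) (ha : (g.trunc d).IsAcyclicPos π) : g.IsAcyclicPos π := by
  intro π₁ π₂ m h₁ h₂ p₁ p₂
  obtain ⟨z₁, q₁, hz₁⟩ := exists_trunc_isPos_of_prefix hd hp hx (h₁.trans h₂) p₁
  obtain ⟨z₂, q₂, hz₂⟩ := exists_trunc_isPos_of_prefix hd hp hx h₂ p₂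
  obtain rfl : z₁ = z₂ := Subtype.ext (hz₁.trans hz₂.symm)
  exact ha π₁ π₂ z₁ h₁ h₂ q₁ q₂

theorem trunc_nodePosAcy_inl (hn : g.Retained d n) :
    (g.trunc d).nodePosAcy ⟨Sum.inl n, hn⟩ = g.nodePosAcy n :=
  Set.ext fun _ => ⟨fun ⟨hp, ha⟩ => ⟨isPos_of_trunc_isPos hn.ne_zero hp rfl,
      isAcyclicPos_of_trunc hn.ne_zero hp rfl ha⟩,
    fun ⟨hp, ha⟩ => ⟨hp.trunc_of_isAcyclicPos ha hn, ha.trunc hn.ne_zero⟩⟩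

theorem trunc_mem_acyPred_inl (hn : g.Retained d n) (hm : g.Retained d m)
    (hmn : m ∈ g.acyPred n) :
    (⟨Sum.inl m, hm⟩ : TNode g d) ∈ (g.trunc d).acyPred ⟨Sum.inl n, hn⟩ := by
  obtain ⟨π, i, hπi, hπ⟩ := hmn
  exact ⟨π, i, trunc_nodePosAcy_inl hn ▸ hπi,
    hπ.trunc_of_isAcyclicPos (hπi.2.of_prefix (List.prefix_append _ _)) hm⟩

theorem exists_of_mem_trunc_acyPred_inl {hn : g.Retained d n} {x : TNode g d}
    (hx : x ∈ (g.trunc d).acyPred ⟨Sum.inl n, hn⟩) : ∃ m, x.1 = Sum.inl m ∧ m ∈ g.acyPred n := by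
  obtain ⟨π, i, hπi, hπ⟩ := hx
  obtain ⟨y, hi, hy, -⟩ := hπi.1.of_snoc
  obtain rfl := hy.unique hπ
  obtain ⟨m | p, hm⟩ := y
  · refine ⟨m, rfl, π, i, ?_, isPos_of_trunc_isPos hn.ne_zero hπ rfl⟩
    exact trunc_nodePosAcy_inl hn ▸ hπi
  · exact absurd hi (Nat.not_lt_zero _)

theorem trunc_mem_acyPred_inl_iff (hn : g.Retained d n) (hm : g.Retained d m) :
    (⟨Sum.inl m, hm⟩ : TNode g d) ∈ (g.trunc d).acyPred ⟨Sum.inl n, hn⟩ ↔ m ∈ g.acyPred n := by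
  refine ⟨fun h => ?_, trunc_mem_acyPred_inl hn hm⟩
  obtain ⟨m', hm', hmn⟩ := exists_of_mem_trunc_acyPred_inl h
  exact Sum.inl.inj hm' ▸ hmn

theorem val_eq_of_mem_trunc_acyPred_inr {hf : g.IsFringe d (n, i)} {x : TNode g d}
    (hx : x ∈ (g.trunc d).acyPred ⟨Sum.inr (n, i), hf⟩) : x.1 = Sum.inl n := by
  obtain ⟨π, j, ⟨hπj, -⟩, hπ⟩ := hx
  obtain ⟨y, hj, hy, hsuc⟩ := hπj.of_snoc
  obtain rfl := hy.unique hπ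
  revert hj hsuc
  obtain ⟨m | p, hm⟩ := y
  · intro hj hsuc
    have hval := congrArg Subtype.val hsuc
    rw [trunc_suc_val hm hj] at hval
    split_ifs at hval
    obtain ⟨rfl, rfl⟩ := Prod.mk.inj (Sum.inr.inj hval)
    rfl
  · exact fun hj => absurd hj (Nat.not_lt_zero _)

theorem trunc_inl_mem_acyPred_inr (hR : g.Reachable) (hn : g.Retained d n)
    (hf : g.IsFringe d (n, i)) :
    (⟨Sum.inl n, hn⟩ : TNode g d) ∈ (g.trunc d).acyPred ⟨Sum.inr (n, i), hf⟩ := by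
  obtain ⟨σ, hσ, ha, -⟩ := hR.exists_acyclic_length_eq_depth n
  have hσ' := hσ.trunc_of_isAcyclicPos ha hn
  have hfp := trunc_isPos_snoc_of_isFringe hσ' (hf.lt_ar hn.ne_zero) hf
  refine ⟨σ, i, ⟨hfp, fun π₁ π₂ x h₁ h₂ p₁ p₂ => ?_⟩, hσ'⟩
  rcases List.prefix_concat_iff.mp h₂ with rfl | h₂
  · by_contra hne
    obtain ⟨m, hm⟩ := exists_val_eq_inl_of_isPos_prefix p₂ p₁ h₁ hne
    rw [p₂.unique hfp] at hm
    exact Sum.inr_ne_inl hm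
  · exact ha.trunc hn.ne_zero π₁ π₂ x h₁ h₂ p₁ p₂

theorem trunc_depth_inl (hR : g.Reachable) (hn : g.Retained d n) :
    (g.trunc d).depth ⟨Sum.inl n, hn⟩ = g.depth n := by
  obtain ⟨ρ, hρ, ha, hlen⟩ := hR.exists_acyclic_length_eq_depth n
  have hρ' := hρ.trunc_of_isAcyclicPos ha hn
  refine le_antisymm (hlen ▸ depth_le_length hρ') ?_
  obtain ⟨σ, hσ, -, hσlen⟩ := hρ'.exists_acyclic_length_eq_depth
  exact hσlen ▸ depth_le_length (isPos_of_trunc_isPos hn.ne_zero hσ rfl)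

theorem trunc_depth_inr (hR : g.Reachable) (hd : d ≠ 0) (hf : g.IsFringe d (n, i)) :
    (g.trunc d).depth ⟨Sum.inr (n, i), hf⟩ = g.depth n + 1 := by
  have hn := hf.retained hd
  obtain ⟨ρ, hρ, ha, hlen⟩ := hR.exists_acyclic_length_eq_depth n
  have hfp := trunc_isPos_snoc_of_isFringe (hρ.trunc_of_isAcyclicPos ha hn) (hf.lt_ar hd) hf
  refine le_antisymm (by simpa [hlen] using depth_le_length hfp) ?_
  obtain ⟨π, hπ, -, hπlen⟩ := hfp.exists_acyclic_length_eq_depth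
  obtain ⟨σ, hn', rfl, hσ⟩ := trunc_isPos_of_val_inr hd hπ rfl
  have := trunc_depth_inl hR hn' ▸ depth_le_length hσ
  simp only [List.length_append, List.length_singleton] at hπlen
  omega

end TruncAcyclic

section TruncTrunc

variable {g : TermGraph S.bot N} (hR : g.Reachable) {d e : ℕ} (hed : e ≤ d) {m n : N}
  {i : ℕ}
include hR hed

theorem trunc_retained_iff {x : TNode g d} :
    (g.trunc d).Retained e x ↔ Sum.elim (g.Retained e) (fun p => g.depth p.1 + 1 < e) x.1 := by
  constructor
  · intro h
    induction h with
    | @shallow x hx =>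
      obtain ⟨n | ⟨n, i⟩, hn⟩ := x
      · exact .shallow (trunc_depth_inl hR hn ▸ hx)
      · rwa [trunc_depth_inr hR (by omega) hn] at hx
    | @pred y x _ hx ih =>
      obtain ⟨n | ⟨n, i⟩, hn⟩ := y
      · obtain ⟨m, hxm, hmn⟩ := exists_of_mem_trunc_acyPred_inl hx
        rw [hxm]
        exact Retained.pred ih hmn
      · rw [val_eq_of_mem_trunc_acyPred_inr hx]
        exact .shallow (by simp only [Sum.elim_inr] at ih; omega)
  · obtain ⟨n | ⟨n, i⟩, hx⟩ := x
    · intro (h : g.Retained e n)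
      revert hx
      induction h with
      | shallow hn => exact fun hx => .shallow (trunc_depth_inl hR hx ▸ hn)
      | pred hn hmn ih =>
        exact fun hx => (ih (hn.mono hed)).pred (trunc_mem_acyPred_inl _ hx hmn)
    · intro h
      simp only [Sum.elim_inr] at h
      exact .shallow (by rwa [trunc_depth_inr hR (by omega) hx])

theorem trunc_retained_inl_iff (hn : g.Retained d n) :
    (g.trunc d).Retained e ⟨Sum.inl n, hn⟩ ↔ g.Retained e n :=
  trunc_retained_iff hR hed

theorem trunc_retained_inr_iff (hf : g.IsFringe d (n, i)) :
    (g.trunc d).Retained e ⟨Sum.inr (n, i), hf⟩ ↔ g.depth n + 1 < e :=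
  trunc_retained_iff hR hed

theorem trunc_isFringe_inl_iff (hn : g.Retained d n) :
    (g.trunc d).IsFringe e (⟨Sum.inl n, hn⟩, i) ↔
      g.IsFringe e (n, i) ∧ (g.IsFringe d (n, i) → e ≤ g.depth n + 1) := by
  rcases eq_or_ne e 0 with rfl | he
  · simp only [IsFringe, if_true, trunc_root hn.ne_zero, Prod.mk.injEq, zero_le, imp_true_iff,
      and_true]
    exact and_congr_left' ⟨fun h => Sum.inl.inj (congrArg Subtype.val h),
      fun h => Subtype.ext (congrArg Sum.inl h)⟩
  by_cases hi : i < S.bot.ar (g.lab n)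
  swap
  · refine iff_of_false (fun hf => ?_) (fun hf => hi (hf.1.lt_ar he))
    have := hf.lt_ar he
    exact hi this
  rw [isFringe_iff_of_lt (g := g.trunc d) he (n := ⟨Sum.inl n, hn⟩) hi,
    trunc_retained_inl_iff hR hed, trunc_depth_inl hR]
  by_cases hfd : g.IsFringe d (n, i)
  · rw [trunc_suc_of_isFringe hn hi hfd, trunc_retained_inr_iff hR hed]
    have := trunc_inl_mem_acyPred_inr hR hn hfd
    constructor
    · rintro ⟨hne, hc⟩
      exact ⟨hfd.mono hed he hne, fun _ => by rcases hc with hc | ⟨hc, -⟩ <;> omega⟩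
    · rintro ⟨hfe, hdep⟩
      exact ⟨hfe.retained he, .inl (by have := hdep hfd; omega)⟩
  · rw [trunc_suc_of_not_isFringe hn hi hfd, trunc_retained_inl_iff hR hed,
      trunc_mem_acyPred_inl_iff, isFringe_iff_of_lt he hi]
    simp [hfd]

end TruncTrunc

section TruncTruncEquiv

variable {g : TermGraph S.bot N} {d e : ℕ}

/-- Names the nodes of `(g†d)†e` as nodes of `g†e`. In a fringe node `x^j` of `(g†d)†e` the
node `x` is always a retained node `n` of `g`, and `x^j` is named `n^j`. -/
def truncTruncVal : TNode g d ⊕ (TNode g d × ℕ) → N ⊕ (N × ℕ)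
  | .inl x => x.1
  | .inr (x, j) => .inr (Sum.elim id Prod.fst x.1, j)

variable (hR : g.Reachable) (hed : e ≤ d) (he : e ≠ 0)
include hR hed he

theorem truncTruncVal_mem (x : TNode (g.trunc d) e) :
    Sum.elim (g.Retained e) (g.IsFringe e) (truncTruncVal x.1) := by
  obtain ⟨v, hx⟩ := x
  rcases v with ⟨n | ⟨n, i⟩, hn⟩ | ⟨⟨n | p, hn⟩, j⟩
  · exact (trunc_retained_inl_iff hR hed hn).mp hx
  · have := (trunc_retained_inr_iff hR hed hn).mp hx
    exact hn.mono hed he (.shallow (by omega))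
  · exact ((trunc_isFringe_inl_iff hR hed hn).mp hx).1
  · exact absurd (hx.lt_ar he) (Nat.not_lt_zero _)

open Classical in
/-- A fringe node `n^i` of `g†e` comes from the fringe node `n^i` of `g†d` when the latter
exists and is retained at depth `e`, and from the fringe node `n^i` of `(g†d)†e` otherwise. -/
noncomputable def truncTruncEquiv : TNode (g.trunc d) e ≃ TNode g e where
  toFun x := ⟨truncTruncVal x.1, truncTruncVal_mem hR hed he x⟩
  invFun
    | ⟨.inl n, hn⟩ => ⟨.inl ⟨.inl n, hn.mono hed⟩, (trunc_retained_inl_iff hR hed _).mpr hn⟩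
    | ⟨.inr (n, i), hf⟩ =>
      if h : g.IsFringe d (n, i) ∧ g.depth n + 1 < e then
        ⟨.inl ⟨.inr (n, i), h.1⟩, (trunc_retained_inr_iff hR hed h.1).mpr h.2⟩
      else
        ⟨.inr (⟨.inl n, (hf.retained he).mono hed⟩, i), (trunc_isFringe_inl_iff hR hed _).mpr
          ⟨hf, fun hfd => not_lt.mp fun hlt => h ⟨hfd, hlt⟩⟩⟩
  left_inv := by
    rintro ⟨v, hx⟩
    rcases v with ⟨n | ⟨n, i⟩, hn⟩ | ⟨⟨n | p, hn⟩, j⟩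
    · rfl
    · have hf : g.IsFringe d (n, i) := hn
      have := (trunc_retained_inr_iff hR hed hn).mp hx
      simp [truncTruncVal, hf, this]
    · have hc := ((trunc_isFringe_inl_iff hR hed hn).mp hx).2
      have : ¬ (g.IsFringe d (n, j) ∧ g.depth n + 1 < e) := fun h => by
        have := hc h.1
        omega
      simp [truncTruncVal, this]
    · exact absurd (hx.lt_ar he) (Nat.not_lt_zero _)
  right_inv := by
    rintro ⟨n | ⟨n, i⟩, hx⟩
    · rfl
    · simp only
      split_ifs <;> rfl

theorem isDHom_truncTruncEquiv :
    IsDHom ∅ ((g.trunc d).trunc e) (g.trunc e) (truncTruncEquiv hR hed he) where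
  root_eq := by
    apply Subtype.ext
    show truncTruncVal ((g.trunc d).trunc e).root.1 = (g.trunc e).root.1
    rw [trunc_root he, trunc_root he]
    show ((g.trunc d).root).1 = _
    rw [trunc_root (by omega)]
  lab_eq := by
    rintro ⟨v, hx⟩ -
    rcases v with ⟨n | ⟨n, i⟩, hn⟩ | ⟨⟨n | p, hn⟩, j⟩ <;> rfl
  suc_eq := by
    rintro ⟨v, hx⟩ - i hi hi'
    rcases v with ⟨n | ⟨n, k⟩, hn⟩ | ⟨y, j⟩
    · have hne : g.Retained e n := (trunc_retained_inl_iff hR hed hn).mp hx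
      apply Subtype.ext
      show truncTruncVal (((g.trunc d).trunc e).suc ⟨Sum.inl ⟨Sum.inl n, hn⟩, hx⟩ ⟨i, hi⟩).1 =
        ((g.trunc e).suc ⟨Sum.inl n, hne⟩ ⟨i, hi'⟩).1
      rw [trunc_suc_val hx hi, trunc_suc_val hne hi']
      have hiff := trunc_isFringe_inl_iff hR hed hn (i := i)
      by_cases h₁ : (g.trunc d).IsFringe e (⟨Sum.inl n, hn⟩, i)
      · rw [if_pos h₁, if_pos (hiff.mp h₁).1]
        rfl
      · rw [if_neg h₁]
        show ((g.trunc d).suc ⟨Sum.inl n, hn⟩ ⟨i, hi⟩).1 = _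
        rw [trunc_suc_val hn hi]
        by_cases h₂ : g.IsFringe d (n, i)
        · rw [if_pos h₂, if_pos (h₂.mono hed he hne)]
        · rw [if_neg h₂, if_neg fun h₃ => h₁ (hiff.mpr ⟨h₃, fun h => absurd h h₂⟩)]
    · exact absurd hi (Nat.not_lt_zero _)
    · exact absurd hi (Nat.not_lt_zero _)

end TruncTruncEquiv

theorem trunc_trunc_iso {g : TermGraph S.bot N} (hR : g.Reachable) {d e : ℕ} (hed : e ≤ d) :
    Iso ((g.trunc d).trunc e) (g.trunc e) := by
  rcases eq_or_ne e 0 with rfl | he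
  · exact trunc_zero_iso _ _
  · exact iso_iff_exists_equiv.mpr ⟨_, isDHom_truncTruncEquiv hR hed he⟩

section ShortPositions

variable {g : TermGraph S.bot N} {d : ℕ} {π π' : List ℕ} {n : N}

theorem trunc_aliases_iff (hπ : π.length < d) (hπ' : π'.length < d) :
    (g.trunc d).Aliases π π' ↔ g.Aliases π π' := by
  constructor
  · rintro ⟨x, h₁, h₂⟩
    obtain ⟨n, hn⟩ := exists_val_eq_inl_of_trunc_isPos h₁ hπ
    have hd : d ≠ 0 := Nat.ne_zero_of_lt hπ
    exact ⟨n, isPos_of_trunc_isPos hd h₁ hn, isPos_of_trunc_isPos hd h₂ hn⟩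
  · rintro ⟨n, h₁, h₂⟩
    exact ⟨_, h₁.trunc_of_length_lt hπ, h₂.trunc_of_length_lt hπ'⟩

theorem trunc_labAt (hπ : π.length < d) (hp : g.IsPos π n) :
    (g.trunc d).labAt π = g.labAt π := by
  rw [labAt_eq (hp.trunc_of_length_lt hπ), labAt_eq hp]
  rfl

end ShortPositions

end TermGraph

namespace CTG

variable {S : Signature}

open TermGraph

theorem mem_nodes_iff (g : CTG S) {C : Set (List ℕ)} :
    C ∈ g.nodes ↔ ∃ π, g.tg.Aliases π π ∧ C = {π' | g.tg.Aliases π' π} := by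
  constructor
  · intro hC
    obtain ⟨π, hπ⟩ := g.reach ⟨C, hC⟩
    exact ⟨π, ⟨_, hπ, hπ⟩, (g.canon ⟨C, hC⟩).trans (nodePos_eq_setOf_aliases hπ)⟩
  · rintro ⟨π, ⟨n, hπ, -⟩, rfl⟩
    rw [← nodePos_eq_setOf_aliases hπ, ← g.canon n]
    exact n.2

theorem ext_of_aliases {g h : CTG S} (hal : ∀ π π', g.tg.Aliases π π' ↔ h.tg.Aliases π π')
    (hlab : ∀ π ∈ g.tg.pos, g.tg.labAt π = h.tg.labAt π) : g = h := by
  have hnodes : g.nodes = h.nodes := Set.ext fun C => by simp only [mem_nodes_iff, hal]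
  obtain ⟨gN, g, gR, gC⟩ := g
  obtain ⟨hN, h, hR, hC⟩ := h
  obtain rfl : gN = hN := hnodes
  have hpos : ∀ π n, g.IsPos π n ↔ h.IsPos π n := fun π n =>
    show π ∈ g.nodePos n ↔ π ∈ h.nodePos n by rw [← gC, ← hC]
  obtain rfl : g = h := ext_of_isPos_iff gR hpos fun n => by
    obtain ⟨π, hπ⟩ := gR n
    rw [← labAt_eq hπ, ← labAt_eq ((hpos π n).mp hπ)]
    exact hlab π ⟨n, hπ⟩
  rfl

theorem eq_of_forall_trunc_iso {g h : CTG S.bot}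
    (H : ∀ k : ℕ, Iso (g.tg.trunc k) (h.tg.trunc k)) : g = h := by
  have hal : ∀ π π', g.tg.Aliases π π' ↔ h.tg.Aliases π π' := fun π π' => by
    have h₁ : π.length < max π.length π'.length + 1 := by omega
    have h₂ : π'.length < max π.length π'.length + 1 := by omega
    rw [← trunc_aliases_iff h₁ h₂, (H _).aliases_iff, trunc_aliases_iff h₁ h₂]
  refine ext_of_aliases hal fun π ⟨n, hn⟩ => ?_
  obtain ⟨m, hm, -⟩ := (hal π π).mp ⟨n, hn, hn⟩
  have hlt := Nat.lt_succ_self π.length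
  rw [← trunc_labAt hlt hn, (H _).labAt_eq ⟨_, hn.trunc_of_length_lt hlt⟩, trunc_labAt hlt hm]

section TruncIso

variable {N M K : Type} {g : TermGraph S.bot N} {h : TermGraph S.bot M}
  {k : TermGraph S.bot K} {d e : ℕ∞}

theorem TruncIso.symm (hT : TruncIso g h d) : TruncIso h g d :=
  ⟨fun ht => (hT.1 ht).symm, fun n hn => (hT.2 n hn).symm⟩

theorem TruncIso.trans (hT : TruncIso g h d) (hT' : TruncIso h k d) : TruncIso g k d :=
  ⟨fun ht => (hT.1 ht).trans (hT'.1 ht), fun n hn => (hT.2 n hn).trans (hT'.2 n hn)⟩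

theorem truncIso_zero (g : TermGraph S.bot N) (h : TermGraph S.bot M) : TruncIso g h 0 :=
  ⟨fun h0 => absurd h0 ENat.zero_ne_top, fun n hn => by
    obtain rfl : n = 0 := by exact_mod_cast hn.symm
    exact trunc_zero_iso g h⟩

theorem TruncIso.mono (hg : g.Reachable) (hh : h.Reachable) (hT : TruncIso g h d)
    (hed : e ≤ d) : TruncIso g h e := by
  refine ⟨fun he => hT.1 (top_le_iff.mp (he ▸ hed)), fun n hn => ?_⟩
  subst hn
  induction d using ENat.recTopCoe with
  | top => exact (hT.1 rfl).trunc n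
  | coe m =>
    have hnm : n ≤ m := by exact_mod_cast hed
    exact ((trunc_trunc_iso hg hnm).symm.trans ((hT.2 m rfl).trunc n)).trans
      (trunc_trunc_iso hh hnm)

end TruncIso

variable {g h g₁ g₂ g₃ : CTG S.bot}

theorem truncIso_of_le_simr {n : ℕ} (hn : (n : ℕ∞) ≤ simr g h) : TruncIso g.tg h.tg n := by
  rcases hn.lt_or_eq with hlt | heq
  · obtain ⟨d, hd, hnd⟩ := lt_sSup_iff.mp hlt
    exact hd.mono g.reach h.reach hnd.le
  · have : Nonempty {d | TruncIso g.tg h.tg d} := ⟨⟨0, truncIso_zero _ _⟩⟩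
    rw [heq]
    exact ENat.sSup_mem_of_nonempty_of_lt_top (heq ▸ ENat.natCast_lt_top n)

theorem simr_comm (g h : CTG S.bot) : simr g h = simr h g :=
  congrArg sSup (Set.ext fun _ => ⟨TruncIso.symm, TruncIso.symm⟩)

theorem simr_eq_top_iff : simr g h = ⊤ ↔ g = h := by
  refine ⟨fun htop => eq_of_forall_trunc_iso fun n => ?_, ?_⟩
  · exact (truncIso_of_le_simr (htop ▸ le_top)).2 n rfl
  · rintro rfl
    exact top_le_iff.mp (le_sSup ⟨fun _ => Iso.refl _, fun _ _ => Iso.refl _⟩)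

theorem min_simr_le_simr : min (simr g₁ g₂) (simr g₂ g₃) ≤ simr g₁ g₃ :=
  ENat.forall_natCast_le_iff_le.mp fun _ hn =>
    le_sSup ((truncIso_of_le_simr (hn.trans (min_le_left _ _))).trans
      (truncIso_of_le_simr (hn.trans (min_le_right _ _))))

noncomputable def twoPowNeg (s : ℕ∞) : ℝ :=
  if s = ⊤ then 0 else (1 / 2 : ℝ) ^ s.toNat

theorem rdist_eq_twoPowNeg (g h : CTG S.bot) : rdist g h = twoPowNeg (simr g h) := rfl

theorem twoPowNeg_eq_zero_iff {s : ℕ∞} : twoPowNeg s = 0 ↔ s = ⊤ := by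
  unfold twoPowNeg
  split_ifs with hs
  · exact iff_of_true rfl hs
  · exact iff_of_false (pow_ne_zero _ (by norm_num)) hs

theorem twoPowNeg_antitone : Antitone twoPowNeg := by
  intro a b hab
  induction b using ENat.recTopCoe with
  | top =>
    rw [show twoPowNeg ⊤ = 0 from if_pos rfl, twoPowNeg]
    split_ifs <;> positivity
  | coe n =>
    lift a to ℕ using ne_top_of_le_ne_top (ENat.natCast_ne_top n) hab
    simp only [twoPowNeg, ENat.natCast_ne_top, if_false, ENat.toNat_natCast]
    exact pow_le_pow_of_le_one (by norm_num) (by norm_num) (by exact_mod_cast hab)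

end CTG

/-- The pair (total canonical term graphs over `Σ`, `d†`) is an
ultrametric space: `d†(g,h) = 0` iff `g = h`, `d†(g,h) = d†(h,g)`, and
`d†(g₁,g₃) ≤ max {d†(g₁,g₂), d†(g₂,g₃)}`. -/
theorem rigid_ultrametric (S : Signature) :
    (∀ g h : CTG S.bot, g.Total → h.Total → (CTG.rdist g h = 0 ↔ g = h)) ∧
    (∀ g h : CTG S.bot, g.Total → h.Total → CTG.rdist g h = CTG.rdist h g) ∧
    (∀ g₁ g₂ g₃ : CTG S.bot, g₁.Total → g₂.Total → g₃.Total →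
      CTG.rdist g₁ g₃ ≤ max (CTG.rdist g₁ g₂) (CTG.rdist g₂ g₃)) := by
  simp only [CTG.rdist_eq_twoPowNeg]
  refine ⟨fun g h _ _ => ?_, fun g h _ _ => ?_, fun g₁ g₂ g₃ _ _ _ => ?_⟩
  · rw [CTG.twoPowNeg_eq_zero_iff, CTG.simr_eq_top_iff]
  · rw [CTG.simr_comm]
  · rw [← CTG.twoPowNeg_antitone.map_min]
    exact CTG.twoPowNeg_antitone CTG.min_simr_le_simr

end TGR
end
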